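/- arXiv:2312.10268 — 14 statements merged into one kernel-verified Lean document; each statement's English description precedes it below -/
import Mathlib

section
/- Let k > 0 and φ > 0 be real, let ξ0 ∈ ℝ, set c0 = k·coth(φ) and ξ = x − c0·t − ξ0, and define f(x,t) = 1 + e^{i k ξ + φ} and f'(x,t) = 1 + e^{i k ξ − φ}. Then f and f' satisfy the Hirota bilinear equation of the Benjamin–Ono equation: i(∂_t f' · f − f' · ∂_t f) = ∂_x² f' · f − 2 ∂_x f' · ∂_x f + f' · ∂_x² f holds at every real (x, t). -/
/-- The Hirota bilinear equation associated with the Benjamin–Ono equation: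
`i(∂_t f' · f − f' · ∂_t f) = ∂_x² f' · f − 2 ∂_x f' · ∂_x f + f' · ∂_x² f`
at all real `(x,t)`, where `g` plays the role of `f'`. -/
def HirotaBO (f g : ℝ → ℝ → ℂ) : Prop :=
  ∀ x t : ℝ,
    Complex.I * (deriv (fun s => g x s) t * f x t - g x t * deriv (fun s => f x s) t) =
      deriv (fun y => deriv (fun z => g z t) y) x * f x t
        - 2 * deriv (fun y => g y t) x * deriv (fun y => f y t) x
        + g x t * deriv (fun y => deriv (fun z => f z t) y) x

/-! Both tau functions have the form `1 + A e^{iθ}` with the common phase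
`θ = k (x - c t - ξ0)`. Substituting, the `e^{2iθ}` terms cancel identically and the
`e^{iθ}` terms leave `k (k (A + B) - c (A - B)) e^{iθ}`, so the bilinear equation reduces to
the dispersion relation `c (A - B) = k (A + B)`; for `A = e^φ`, `B = e^{-φ}` it reads
`c sinh φ = k cosh φ`. -/

open Complex

namespace BenjaminOno

variable (k c ξ0 : ℝ)

noncomputable def travelingWave (x t : ℝ) : ℂ :=
  cexp (I * (k * (x - c * t - ξ0)))

variable {k c ξ0}

theorem hasDerivAt_travelingWave_x (x t : ℝ) :
    HasDerivAt (fun y => travelingWave k c ξ0 y t) (I * k * travelingWave k c ξ0 x t) x :=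
  (((((hasDerivAt_id x).ofReal_comp.sub_const ((c : ℂ) * t)).sub_const (ξ0 : ℂ)).const_mul
    (k : ℂ)).const_mul I).cexp.congr_deriv (by simp [travelingWave]; ring)

theorem hasDerivAt_travelingWave_t (x t : ℝ) :
    HasDerivAt (fun s => travelingWave k c ξ0 x s) (-(I * k * c) * travelingWave k c ξ0 x t) t :=
  ((((((hasDerivAt_id t).ofReal_comp.const_mul (c : ℂ)).const_sub (x : ℂ)).sub_const
    (ξ0 : ℂ)).const_mul (k : ℂ)).const_mul I).cexp.congr_deriv (by simp [travelingWave]; ring)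

theorem deriv_one_add_mul_travelingWave_x (A : ℂ) (t : ℝ) :
    deriv (fun y => 1 + A * travelingWave k c ξ0 y t) =
      fun x => A * (I * k) * travelingWave k c ξ0 x t :=
  funext fun x => (((hasDerivAt_travelingWave_x x t).const_mul A).const_add 1).deriv.trans
    (mul_assoc ..).symm

theorem deriv_deriv_one_add_mul_travelingWave_x (A : ℂ) (x t : ℝ) :
    deriv (fun y => deriv (fun z => 1 + A * travelingWave k c ξ0 z t) y) x =
      -k ^ 2 * A * travelingWave k c ξ0 x t := by
  rw [deriv_one_add_mul_travelingWave_x, ((hasDerivAt_travelingWave_x x t).const_mul _).deriv]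
  linear_combination (k ^ 2 * A * travelingWave k c ξ0 x t) * I_sq

theorem deriv_one_add_mul_travelingWave_t (A : ℂ) (x t : ℝ) :
    deriv (fun s => 1 + A * travelingWave k c ξ0 x s) t =
      -(I * k * c) * A * travelingWave k c ξ0 x t := by
  rw [(((hasDerivAt_travelingWave_t x t).const_mul A).const_add 1).deriv]; ring

theorem hirotaBO_one_add_mul_travelingWave {A B : ℂ} (h : c * (A - B) = k * (A + B)) :
    HirotaBO (fun x t => 1 + A * travelingWave k c ξ0 x t)
      (fun x t => 1 + B * travelingWave k c ξ0 x t) := by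
  intro x t
  rw [deriv_deriv_one_add_mul_travelingWave_x, deriv_deriv_one_add_mul_travelingWave_x,
    deriv_one_add_mul_travelingWave_t, deriv_one_add_mul_travelingWave_t,
    deriv_one_add_mul_travelingWave_x, deriv_one_add_mul_travelingWave_x]
  set E := travelingWave k c ξ0 x t
  linear_combination (-(k * E)) * h + (k * c * E * (A - B) + 2 * k ^ 2 * A * B * E ^ 2) * I_sq

end BenjaminOno

theorem hirota_one_periodic_general (k φ ξ0 c0 : ℝ) (hφ : 0 < φ)
    (hc0 : c0 = k * Real.cosh φ / Real.sinh φ)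
    (f f' : ℝ → ℝ → ℂ)
    (hf : ∀ x t : ℝ, f x t =
      1 + Complex.exp (Complex.I * (k * (x - c0 * t - ξ0)) + φ))
    (hf' : ∀ x t : ℝ, f' x t =
      1 + Complex.exp (Complex.I * (k * (x - c0 * t - ξ0)) - φ)) :
    HirotaBO f f' := by
  have hf_eq : f = fun x t => 1 + cexp φ * BenjaminOno.travelingWave k c0 ξ0 x t := by
    ext x t; rw [hf, exp_add, mul_comm, BenjaminOno.travelingWave]
  have hf'_eq : f' = fun x t => 1 + cexp (-φ) * BenjaminOno.travelingWave k c0 ξ0 x t := by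
    ext x t; rw [hf', sub_eq_add_neg, exp_add, mul_comm, BenjaminOno.travelingWave]
  have hdisp_real : c0 * Real.sinh φ = k * Real.cosh φ := by
    rw [hc0, div_mul_cancel₀ _ (Real.sinh_pos_iff.2 hφ).ne']
  have hdisp : (c0 : ℂ) * sinh φ = k * cosh φ := by exact_mod_cast hdisp_real
  rw [hf_eq, hf'_eq]
  refine BenjaminOno.hirotaBO_one_add_mul_travelingWave ?_
  rw [sinh, cosh] at hdisp
  linear_combination 2 * hdisp

/-- the tau functions of the traveling periodic wave of the
Benjamin–Ono equation satisfy the Hirota bilinear equation. -/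
theorem hirota_one_periodic (k φ ξ0 c0 : ℝ) (hk : 0 < k) (hφ : 0 < φ)
    (hc0 : c0 = k * Real.cosh φ / Real.sinh φ)
    (f f' : ℝ → ℝ → ℂ)
    (hf : ∀ x t : ℝ, f x t =
      1 + Complex.exp (Complex.I * (k * (x - c0 * t - ξ0)) + φ))
    (hf' : ∀ x t : ℝ, f' x t =
      1 + Complex.exp (Complex.I * (k * (x - c0 * t - ξ0)) - φ)) :
    HirotaBO f f' :=
  hirota_one_periodic_general k φ ξ0 c0 hφ hc0 f f' hf hf'
end

section
/- Let k > 0 and φ > 0 be real, let ξ0 ∈ ℝ, set c0 = k·coth(φ) and ξ = x − c0·t − ξ0, and define f(x,t) = 1 + e^{i k ξ + φ} and f'(x,t) = 1 + e^{i k ξ − φ}. Then for every real (x,t) one has f(x,t) ≠ 0, f'(x,t) ≠ 0, and i·(∂_x f' · f − f' · ∂_x f)/(f' · f) = k·sinh(φ)/(cos(kξ) + cosh(φ)); in particular i ∂_x log(f'/f) equals the traveling periodic wave of the Benjamin–Ono equation. -/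
/-!
Write `z = exp (i k ξ)`, so that `f = 1 + z e^φ`, `f' = 1 + z e^{-φ}` and `∂ₓ f = i k z e^φ`,
`∂ₓ f' = i k z e^{-φ}`. In the numerator the `z²` terms cancel, leaving `2 k z sinh φ`, while the
denominator factors as `f' f = 2 z (cos kξ + cosh φ)`; the common factor `2 z` cancels.
Neither tau function vanishes because `|z e^{±φ}| = e^{±φ} ≠ 1`.
-/

open Complex

lemma one_add_cexp_ne_zero {w : ℂ} (hw : w.re ≠ 0) : 1 + exp w ≠ 0 := by
  intro h
  have hnorm : ‖exp w‖ = 1 := by rw [eq_neg_of_add_eq_zero_right h, norm_neg, norm_one]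
  rw [norm_exp, Real.exp_eq_one_iff] at hnorm
  exact hw hnorm

lemma hasDerivAt_one_add_cexp_I_mul (k s d : ℂ) (x : ℝ) :
    HasDerivAt (fun y : ℝ => 1 + exp (I * (k * (y - s)) + d))
      (I * k * exp (I * (k * (x - s)) + d)) x := by
  have hphase : HasDerivAt (fun y : ℝ => I * (k * (y - s)) + d) (I * k) x := by
    simpa using ((((hasDerivAt_id (x : ℂ)).comp_ofReal).sub_const s).const_mul k).const_mul I
      |>.add_const d
  simpa [mul_comm] using hphase.cexp.const_add 1

lemma one_add_cexp_sub_mul_one_add_cexp_add (θ φ : ℂ) :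
    (1 + exp (I * θ - φ)) * (1 + exp (I * θ + φ)) = 2 * exp (I * θ) * (cos θ + cosh φ) := by
  rw [cos, cosh, exp_sub, exp_add, mul_comm θ I, neg_mul, exp_neg, exp_neg]
  field_simp
  ring

lemma hirota_quotient_one_add_cexp (k θ φ : ℂ) :
    I * (I * k * exp (I * θ - φ) * (1 + exp (I * θ + φ))
        - (1 + exp (I * θ - φ)) * (I * k * exp (I * θ + φ)))
      / ((1 + exp (I * θ - φ)) * (1 + exp (I * θ + φ)))
      = k * sinh φ / (cos θ + cosh φ) := by
  have hnum : I * (I * k * exp (I * θ - φ) * (1 + exp (I * θ + φ))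
      - (1 + exp (I * θ - φ)) * (I * k * exp (I * θ + φ)))
      = 2 * exp (I * θ) * (k * sinh φ) := by
    rw [sinh, exp_sub, exp_add, exp_neg]
    field_simp
    linear_combination k * (1 - exp φ ^ 2) * I_mul_I
  rw [hnum, one_add_cexp_sub_mul_one_add_cexp_add,
    mul_div_mul_left _ _ (mul_ne_zero two_ne_zero (exp_ne_zero _))]

theorem hirota_quotient_eq_periodic_wave_general (k φ ξ0 c0 : ℝ) (hφ : 0 < φ)
    (f f' : ℝ → ℝ → ℂ)
    (hf : ∀ x t : ℝ, f x t =
      1 + Complex.exp (Complex.I * (k * (x - c0 * t - ξ0)) + φ))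
    (hf' : ∀ x t : ℝ, f' x t =
      1 + Complex.exp (Complex.I * (k * (x - c0 * t - ξ0)) - φ)) :
    ∀ x t : ℝ,
      f x t ≠ 0 ∧ f' x t ≠ 0 ∧
      Complex.I * (deriv (fun y => f' y t) x * f x t - f' x t * deriv (fun y => f y t) x)
          / (f' x t * f x t)
        = ((k * Real.sinh φ / (Real.cos (k * (x - c0 * t - ξ0)) + Real.cosh φ) : ℝ) : ℂ) := by
  intro x t
  simp only [hf, hf', sub_sub, sub_eq_add_neg _ (φ : ℂ)]
  refine ⟨one_add_cexp_ne_zero (by simp [hφ.ne']),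
    one_add_cexp_ne_zero (by simp [hφ.ne']), ?_⟩
  rw [(hasDerivAt_one_add_cexp_I_mul k _ φ x).deriv,
    (hasDerivAt_one_add_cexp_I_mul k _ (-φ) x).deriv, ← sub_eq_add_neg, hirota_quotient_one_add_cexp]
  simp

/-- the Hirota quotient `i ∂_x log(f'/f)` of the one-periodic tau
functions equals the traveling periodic wave of the Benjamin–Ono equation. -/
theorem hirota_quotient_eq_periodic_wave (k φ ξ0 c0 : ℝ) (hk : 0 < k) (hφ : 0 < φ)
    (hc0 : c0 = k * Real.cosh φ / Real.sinh φ)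
    (f f' : ℝ → ℝ → ℂ)
    (hf : ∀ x t : ℝ, f x t =
      1 + Complex.exp (Complex.I * (k * (x - c0 * t - ξ0)) + φ))
    (hf' : ∀ x t : ℝ, f' x t =
      1 + Complex.exp (Complex.I * (k * (x - c0 * t - ξ0)) - φ)) :
    ∀ x t : ℝ,
      f x t ≠ 0 ∧ f' x t ≠ 0 ∧
      Complex.I * (deriv (fun y => f' y t) x * f x t - f' x t * deriv (fun y => f y t) x)
          / (f' x t * f x t)
        = ((k * Real.sinh φ / (Real.cos (k * (x - c0 * t - ξ0)) + Real.cosh φ) : ℝ) : ℂ) :=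
  hirota_quotient_eq_periodic_wave_general k φ ξ0 c0 hφ f f' hf hf'
end

section
/- Let k, φ, κ, ψ > 0 be real, let ξ0, η0 ∈ ℝ, set c0 = k·coth(φ), c = κ·coth(ψ), ξ = x − c0·t − ξ0, η = x − c·t − η0, and assume (c − c0)² > (κ + k)². Let α = sqrt(((c − c0)² − (κ + k)²)/((c − c0)² − (κ − k)²)). Then f(x,t) = 1 + α e^{i k ξ + φ} + α e^{i κ η + ψ} + e^{i k ξ + i κ η + φ + ψ} and f'(x,t) = 1 + α e^{i k ξ − φ} + α e^{i κ η − ψ} + e^{i k ξ + i κ η − φ − ψ} satisfy the Hirota bilinear equation i(∂_t f' · f − f' · ∂_t f) = ∂_x² f' · f − 2 ∂_x f' · ∂_x f + f' · ∂_x² f at every real (x,t). -/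
lemma hasDerivAt_cexp_lin (a b : ℂ) (t : ℝ) :
    HasDerivAt (fun s : ℝ => Complex.exp (a * s + b)) (a * Complex.exp (a * t + b)) t := by
  have h := ((((hasDerivAt_id (t : ℂ)).const_mul a).add_const b).cexp).comp_ofReal
  simpa [mul_comm] using h

lemma expShape (w1 a1 b1 w2 a2 b2 w3 a3 b3 : ℂ) (t : ℝ) :
    HasDerivAt (fun s : ℝ => w1 * Complex.exp (a1 * s + b1) + w2 * Complex.exp (a2 * s + b2)
        + w3 * Complex.exp (a3 * s + b3))
      (w1 * (a1 * Complex.exp (a1 * t + b1)) + w2 * (a2 * Complex.exp (a2 * t + b2))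
        + w3 * (a3 * Complex.exp (a3 * t + b3))) t :=
  (((hasDerivAt_cexp_lin a1 b1 t).const_mul w1).add
    ((hasDerivAt_cexp_lin a2 b2 t).const_mul w2)).add
    ((hasDerivAt_cexp_lin a3 b3 t).const_mul w3)

lemma expShape1 (w1 a1 b1 w2 a2 b2 w3 a3 b3 : ℂ) (t : ℝ) :
    HasDerivAt (fun s : ℝ => 1 + (w1 * Complex.exp (a1 * s + b1) + w2 * Complex.exp (a2 * s + b2)
        + w3 * Complex.exp (a3 * s + b3)))
      (w1 * (a1 * Complex.exp (a1 * t + b1)) + w2 * (a2 * Complex.exp (a2 * t + b2))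
        + w3 * (a3 * Complex.exp (a3 * t + b3))) t :=
  (expShape w1 a1 b1 w2 a2 b2 w3 a3 b3 t).const_add 1

/-- derivative in time of the tau-function shape -/
lemma deriv_t (A1 B1 C1 A2 B2 C2 p q r : ℂ) (f : ℝ → ℝ → ℂ)
    (hf : ∀ x t : ℝ, f x t = 1 + p * Complex.exp (A1 * x + B1 * t + C1)
        + q * Complex.exp (A2 * x + B2 * t + C2)
        + r * Complex.exp ((A1 + A2) * x + (B1 + B2) * t + (C1 + C2))) (x t : ℝ) :
    deriv (fun s : ℝ => f x s) t
      = p * B1 * Complex.exp (A1 * x + B1 * t + C1)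
        + q * B2 * Complex.exp (A2 * x + B2 * t + C2)
        + r * (B1 + B2) * Complex.exp ((A1 + A2) * x + (B1 + B2) * t + (C1 + C2)) := by
  have hfun : (fun s : ℝ => f x s) = (fun s : ℝ =>
      1 + (p * Complex.exp (B1 * s + (A1 * x + C1)) + q * Complex.exp (B2 * s + (A2 * x + C2))
        + r * Complex.exp ((B1 + B2) * s + ((A1 + A2) * x + (C1 + C2))))) := by
    funext s
    rw [hf x s,
      show (A1 * x + B1 * s + C1 : ℂ) = B1 * s + (A1 * x + C1) from by ring,
      show (A2 * x + B2 * s + C2 : ℂ) = B2 * s + (A2 * x + C2) from by ring,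
      show ((A1 + A2) * x + (B1 + B2) * s + (C1 + C2) : ℂ)
          = (B1 + B2) * s + ((A1 + A2) * x + (C1 + C2)) from by ring]
    ring
  rw [hfun, (expShape1 p B1 (A1 * x + C1) q B2 (A2 * x + C2) r (B1 + B2)
      ((A1 + A2) * x + (C1 + C2)) t).deriv,
    show (B1 * t + (A1 * x + C1) : ℂ) = A1 * x + B1 * t + C1 from by ring,
    show (B2 * t + (A2 * x + C2) : ℂ) = A2 * x + B2 * t + C2 from by ring,
    show ((B1 + B2) * t + ((A1 + A2) * x + (C1 + C2)) : ℂ)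
        = (A1 + A2) * x + (B1 + B2) * t + (C1 + C2) from by ring]
  ring

/-- first derivative in space -/
lemma deriv_x (A1 B1 C1 A2 B2 C2 p q r : ℂ) (f : ℝ → ℝ → ℂ)
    (hf : ∀ x t : ℝ, f x t = 1 + p * Complex.exp (A1 * x + B1 * t + C1)
        + q * Complex.exp (A2 * x + B2 * t + C2)
        + r * Complex.exp ((A1 + A2) * x + (B1 + B2) * t + (C1 + C2))) (t : ℝ) (x : ℝ) :
    deriv (fun y : ℝ => f y t) x
      = p * A1 * Complex.exp (A1 * x + B1 * t + C1)
        + q * A2 * Complex.exp (A2 * x + B2 * t + C2)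
        + r * (A1 + A2) * Complex.exp ((A1 + A2) * x + (B1 + B2) * t + (C1 + C2)) := by
  have hfun : (fun y : ℝ => f y t) = (fun y : ℝ =>
      1 + (p * Complex.exp (A1 * y + (B1 * t + C1)) + q * Complex.exp (A2 * y + (B2 * t + C2))
        + r * Complex.exp ((A1 + A2) * y + ((B1 + B2) * t + (C1 + C2))))) := by
    funext y
    rw [hf y t,
      show (A1 * y + B1 * t + C1 : ℂ) = A1 * y + (B1 * t + C1) from by ring,
      show (A2 * y + B2 * t + C2 : ℂ) = A2 * y + (B2 * t + C2) from by ring,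
      show ((A1 + A2) * y + (B1 + B2) * t + (C1 + C2) : ℂ)
          = (A1 + A2) * y + ((B1 + B2) * t + (C1 + C2)) from by ring]
    ring
  rw [hfun, (expShape1 p A1 (B1 * t + C1) q A2 (B2 * t + C2) r (A1 + A2)
      ((B1 + B2) * t + (C1 + C2)) x).deriv,
    show (A1 * x + (B1 * t + C1) : ℂ) = A1 * x + B1 * t + C1 from by ring,
    show (A2 * x + (B2 * t + C2) : ℂ) = A2 * x + B2 * t + C2 from by ring,
    show ((A1 + A2) * x + ((B1 + B2) * t + (C1 + C2)) : ℂ)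
        = (A1 + A2) * x + (B1 + B2) * t + (C1 + C2) from by ring]
  ring

/-- second derivative in space -/
lemma deriv_xx (A1 B1 C1 A2 B2 C2 p q r : ℂ) (f : ℝ → ℝ → ℂ)
    (hf : ∀ x t : ℝ, f x t = 1 + p * Complex.exp (A1 * x + B1 * t + C1)
        + q * Complex.exp (A2 * x + B2 * t + C2)
        + r * Complex.exp ((A1 + A2) * x + (B1 + B2) * t + (C1 + C2))) (t : ℝ) (x : ℝ) :
    deriv (fun y : ℝ => deriv (fun z : ℝ => f z t) y) x
      = p * A1 ^ 2 * Complex.exp (A1 * x + B1 * t + C1)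
        + q * A2 ^ 2 * Complex.exp (A2 * x + B2 * t + C2)
        + r * (A1 + A2) ^ 2 * Complex.exp ((A1 + A2) * x + (B1 + B2) * t + (C1 + C2)) := by
  have hfun : (fun y : ℝ => deriv (fun z : ℝ => f z t) y) = (fun y : ℝ =>
      (p * A1) * Complex.exp (A1 * y + (B1 * t + C1))
        + (q * A2) * Complex.exp (A2 * y + (B2 * t + C2))
        + (r * (A1 + A2)) * Complex.exp ((A1 + A2) * y + ((B1 + B2) * t + (C1 + C2)))) := by
    funext y
    rw [deriv_x A1 B1 C1 A2 B2 C2 p q r f hf t y,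
      show (A1 * y + B1 * t + C1 : ℂ) = A1 * y + (B1 * t + C1) from by ring,
      show (A2 * y + B2 * t + C2 : ℂ) = A2 * y + (B2 * t + C2) from by ring,
      show ((A1 + A2) * y + (B1 + B2) * t + (C1 + C2) : ℂ)
          = (A1 + A2) * y + ((B1 + B2) * t + (C1 + C2)) from by ring]
  rw [hfun, (expShape (p * A1) A1 (B1 * t + C1) (q * A2) A2 (B2 * t + C2) (r * (A1 + A2))
      (A1 + A2) ((B1 + B2) * t + (C1 + C2)) x).deriv,
    show (A1 * x + (B1 * t + C1) : ℂ) = A1 * x + B1 * t + C1 from by ring,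
    show (A2 * x + (B2 * t + C2) : ℂ) = A2 * x + B2 * t + C2 from by ring,
    show ((A1 + A2) * x + ((B1 + B2) * t + (C1 + C2)) : ℂ)
        = (A1 + A2) * x + (B1 + B2) * t + (C1 + C2) from by ring]
  ring

lemma master (A1 B1 C1 A2 B2 C2 p q r p' q' r' : ℂ)
    (h1 : Complex.I * B1 * (p' - p) = A1 ^ 2 * (p + p'))
    (h2 : Complex.I * B2 * (q' - q) = A2 ^ 2 * (q + q'))
    (h3 : Complex.I * B1 * (r' * q - q' * r) = A1 ^ 2 * (q' * r + r' * q))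
    (h4 : Complex.I * B2 * (r' * p - p' * r) = A2 ^ 2 * (p' * r + r' * p))
    (h5 : Complex.I * (B1 + B2) * (r' - r) + Complex.I * (B1 - B2) * (p' * q - q' * p)
        = (A1 + A2) ^ 2 * (r + r') + (A1 - A2) ^ 2 * (p' * q + q' * p))
    (f g : ℝ → ℝ → ℂ)
    (hf : ∀ x t : ℝ, f x t = 1 + p * Complex.exp (A1 * x + B1 * t + C1)
        + q * Complex.exp (A2 * x + B2 * t + C2)
        + r * Complex.exp ((A1 + A2) * x + (B1 + B2) * t + (C1 + C2)))
    (hg : ∀ x t : ℝ, g x t = 1 + p' * Complex.exp (A1 * x + B1 * t + C1)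
        + q' * Complex.exp (A2 * x + B2 * t + C2)
        + r' * Complex.exp ((A1 + A2) * x + (B1 + B2) * t + (C1 + C2))) :
    HirotaBO f g := by
  intro x t
  have hE : Complex.exp ((A1 + A2) * x + (B1 + B2) * t + (C1 + C2))
      = Complex.exp (A1 * x + B1 * t + C1) * Complex.exp (A2 * x + B2 * t + C2) := by
    rw [← Complex.exp_add]; congr 1; ring
  have dtf := deriv_t A1 B1 C1 A2 B2 C2 p q r f hf x t
  have dtg := deriv_t A1 B1 C1 A2 B2 C2 p' q' r' g hg x t
  have dxf := deriv_x A1 B1 C1 A2 B2 C2 p q r f hf t x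
  have dxg := deriv_x A1 B1 C1 A2 B2 C2 p' q' r' g hg t x
  have dxxf := deriv_xx A1 B1 C1 A2 B2 C2 p q r f hf t x
  have dxxg := deriv_xx A1 B1 C1 A2 B2 C2 p' q' r' g hg t x
  rw [dtf, dtg, dxf, dxg, dxxf, dxxg, hf x t, hg x t, hE]
  set E1 := Complex.exp (A1 * x + B1 * t + C1)
  set E2 := Complex.exp (A2 * x + B2 * t + C2)
  linear_combination E1 * h1 + E2 * h2 + E1 * E2 ^ 2 * h3 + E1 ^ 2 * E2 * h4 + E1 * E2 * h5

set_option maxRecDepth 8000 in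
/-- the tau functions of the 2-periodic solution of the
Benjamin–Ono equation satisfy the Hirota bilinear equation. -/
theorem hirota_two_periodic (k φ κ ψ ξ0 η0 c0 c α : ℝ)
    (hk : 0 < k) (hφ : 0 < φ) (hκ : 0 < κ) (hψ : 0 < ψ)
    (hc0 : c0 = k * Real.cosh φ / Real.sinh φ)
    (hc : c = κ * Real.cosh ψ / Real.sinh ψ)
    (hcon : (c - c0) ^ 2 > (κ + k) ^ 2)
    (hα : α = Real.sqrt (((c - c0) ^ 2 - (κ + k) ^ 2) / ((c - c0) ^ 2 - (κ - k) ^ 2)))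
    (f f' : ℝ → ℝ → ℂ)
    (hf : ∀ x t : ℝ, f x t =
      1 + α * Complex.exp (Complex.I * (k * (x - c0 * t - ξ0)) + φ)
        + α * Complex.exp (Complex.I * (κ * (x - c * t - η0)) + ψ)
        + Complex.exp (Complex.I * (k * (x - c0 * t - ξ0))
            + Complex.I * (κ * (x - c * t - η0)) + φ + ψ))
    (hf' : ∀ x t : ℝ, f' x t =
      1 + α * Complex.exp (Complex.I * (k * (x - c0 * t - ξ0)) - φ)
        + α * Complex.exp (Complex.I * (κ * (x - c * t - η0)) - ψ)
        + Complex.exp (Complex.I * (k * (x - c0 * t - ξ0))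
            + Complex.I * (κ * (x - c * t - η0)) - φ - ψ)) :
    HirotaBO f f' := by
  set e1 := Real.exp φ with he1def
  set e2 := Real.exp ψ with he2def
  have he1 : e1 ≠ 0 := Real.exp_ne_zero φ
  have he2 : e2 ≠ 0 := Real.exp_ne_zero ψ
  have hinv1 : e1 * e1⁻¹ = 1 := mul_inv_cancel₀ he1
  have hinv2 : e2 * e2⁻¹ = 1 := mul_inv_cancel₀ he2
  have h1lt : 1 < e1 := by have := Real.add_one_le_exp φ; simp only [he1def]; linarith
  have h2lt : 1 < e2 := by have := Real.add_one_le_exp ψ; simp only [he2def]; linarith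
  have hu : 0 < e1 - e1⁻¹ := by nlinarith
  have hv : 0 < e2 - e2⁻¹ := by nlinarith
  have hs1 : 0 < Real.sinh φ := Real.sinh_pos_iff.mpr hφ
  have hs2 : 0 < Real.sinh ψ := Real.sinh_pos_iff.mpr hψ
  have hc0s : c0 * Real.sinh φ = k * Real.cosh φ := by rw [hc0]; field_simp
  have hcs : c * Real.sinh ψ = κ * Real.cosh ψ := by rw [hc]; field_simp
  rw [Real.sinh_eq, Real.cosh_eq, Real.exp_neg, ← he1def] at hc0s
  rw [Real.sinh_eq, Real.cosh_eq, Real.exp_neg, ← he2def] at hcs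
  have hc0p : c0 * (e1 ^ 2 - 1) = k * (e1 ^ 2 + 1) := by
    linear_combination (2 * e1) * hc0s + (c0 + k) * hinv1
  have hcp : c * (e2 ^ 2 - 1) = κ * (e2 ^ 2 + 1) := by
    linear_combination (2 * e2) * hcs + (c + κ) * hinv2
  have hDpos : 0 < (c - c0) ^ 2 - (κ - k) ^ 2 := by nlinarith
  have hNpos : 0 < (c - c0) ^ 2 - (κ + k) ^ 2 := by nlinarith
  have hA : α ^ 2 * ((c - c0) ^ 2 - (κ - k) ^ 2) = (c - c0) ^ 2 - (κ + k) ^ 2 := by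
    rw [hα, Real.sq_sqrt (le_of_lt (div_pos hNpos hDpos))]
    field_simp
  have R1 : k*c0*(α*e1⁻¹ - α*e1) + k^2*(α*e1 + α*e1⁻¹) = 0 := by
    linear_combination (-(k*α*e1⁻¹)) * hc0p + ((k*c0 - k^2)*α*e1) * hinv1
  have R2 : κ*c*(α*e2⁻¹ - α*e2) + κ^2*(α*e2 + α*e2⁻¹) = 0 := by
    linear_combination (-(κ*α*e2⁻¹)) * hcp + ((κ*c - κ^2)*α*e2) * hinv2
  have R3 : k*c0*((e1⁻¹*e2⁻¹)*(α*e2) - (α*e2⁻¹)*(e1*e2))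
      + k^2*((α*e2⁻¹)*(e1*e2) + (e1⁻¹*e2⁻¹)*(α*e2)) = 0 := by
    linear_combination (-(k*α*e1⁻¹*(e2*e2⁻¹))) * hc0p + ((k*c0 - k^2)*α*e1*(e2*e2⁻¹)) * hinv1
  have R4 : κ*c*((e1⁻¹*e2⁻¹)*(α*e1) - (α*e1⁻¹)*(e1*e2))
      + κ^2*((α*e1⁻¹)*(e1*e2) + (e1⁻¹*e2⁻¹)*(α*e1)) = 0 := by
    linear_combination (-(κ*α*e2⁻¹*(e1*e1⁻¹))) * hcp + ((κ*c - κ^2)*α*e2*(e1*e1⁻¹)) * hinv2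
  have key : ((e1 - e1⁻¹)*(e2 - e2⁻¹)) * ((k*c0 + κ*c)*(e1⁻¹*e2⁻¹ - e1*e2) + (k*c0 - κ*c)*((α*e1⁻¹)*(α*e2) - (α*e2⁻¹)*(α*e1)) + (k+κ)^2*(e1*e2 + e1⁻¹*e2⁻¹) + (k-κ)^2*((α*e1⁻¹)*(α*e2) + (α*e2⁻¹)*(α*e1))) = 0 := by
    linear_combination ((e1 - e1⁻¹)^2*(e2 - e2⁻¹)^2 / 2) * hA
      + ((-(k*(e2 - e2⁻¹)*((e1 + e1⁻¹)*(e2 - e2⁻¹)+(e1 - e1⁻¹)*(e2 + e2⁻¹))) + α^2*(k*(e2 - e2⁻¹)*((e1 + e1⁻¹)*(e2 - e2⁻¹)-(e1 - e1⁻¹)*(e2 + e2⁻¹))) + (α^2-1)*(2*(κ*(e1 - e1⁻¹)*(e2 + e2⁻¹) - k*(e1 + e1⁻¹)*(e2 - e2⁻¹))*(e2 - e2⁻¹) - (e2 - e2⁻¹)^2*(c0*(e1 - e1⁻¹) - k*(e1 + e1⁻¹)) + (e1 - e1⁻¹)*(e2 - e2⁻¹)*(c*(e2 - e2⁻¹)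 - κ*(e2 + e2⁻¹)))) * e1⁻¹ / 2) * hc0p + (-((-(k*(e2 - e2⁻¹)*((e1 + e1⁻¹)*(e2 - e2⁻¹)+(e1 - e1⁻¹)*(e2 + e2⁻¹))) + α^2*(k*(e2 - e2⁻¹)*((e1 + e1⁻¹)*(e2 - e2⁻¹)-(e1 - e1⁻¹)*(e2 + e2⁻¹))) + (α^2-1)*(2*(κ*(e1 - e1⁻¹)*(e2 + e2⁻¹) - k*(e1 + e1⁻¹)*(e2 - e2⁻¹))*(e2 - e2⁻¹) - (e2 - e2⁻¹)^2*(c0*(e1 - e1⁻¹) - k*(e1 + e1⁻¹)) + (e1 - e1⁻¹)*(e2 - e2⁻¹)*(c*(e2 - e2⁻¹) - κ*(e2 + e2⁻¹)))) * (c0-k) * e1 / 2)) * hinv1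
      + ((-(κ*(e1 - e1⁻¹)*((e1 + e1⁻¹)*(e2 - e2⁻¹)+(e1 - e1⁻¹)*(e2 + e2⁻¹))) - α^2*(κ*(e1 - e1⁻¹)*((e1 + e1⁻¹)*(e2 - e2⁻¹)-(e1 - e1⁻¹)*(e2 + e2⁻¹))) - (α^2-1)*(2*(κ*(e1 - e1⁻¹)*(e2 + e2⁻¹) - k*(e1 + e1⁻¹)*(e2 - e2⁻¹))*(e1 - e1⁻¹) + (e1 - e1⁻¹)^2*(c*(e2 - e2⁻¹) - κ*(e2 + e2⁻¹)) - (e1 - e1⁻¹)*(e2 - e2⁻¹)*(c0*(e1 - e1⁻¹) - k*(e1 + e1⁻¹)))) * e2⁻¹ / 2) * hcp + (-((-(κ*(e1 - e1⁻¹)*((e1 + e1⁻¹)*(e2 - e2⁻¹)+(e1 - e1⁻¹)*(e2 + e2⁻¹))) - α^2*(κ*(e1 - e1⁻¹)*((e1 + e1⁻¹)*(e2 - e2⁻¹)-(e1 - e1⁻¹)*(e2 + e2⁻¹))) - (α^2-1)*(2*(κ*(e1 - e1⁻¹)*(e2 + e2⁻¹) - k*(e1 + e1⁻¹)*(e2 -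 e2⁻¹))*(e1 - e1⁻¹) + (e1 - e1⁻¹)^2*(c*(e2 - e2⁻¹) - κ*(e2 + e2⁻¹)) - (e1 - e1⁻¹)*(e2 - e2⁻¹)*(c0*(e1 - e1⁻¹) - k*(e1 + e1⁻¹)))) * (c-κ) * e2 / 2)) * hinv2
  have R5 : (k*c0 + κ*c)*(e1⁻¹*e2⁻¹ - e1*e2) + (k*c0 - κ*c)*((α*e1⁻¹)*(α*e2) - (α*e2⁻¹)*(α*e1)) + (k+κ)^2*(e1*e2 + e1⁻¹*e2⁻¹) + (k-κ)^2*((α*e1⁻¹)*(α*e2) + (α*e2⁻¹)*(α*e1)) = 0 :=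
    (mul_eq_zero.mp key).resolve_left (ne_of_gt (mul_pos hu hv))
  -- lift to ℂ
  have R1C := congrArg (fun y : ℝ => (y : ℂ)) R1
  have R2C := congrArg (fun y : ℝ => (y : ℂ)) R2
  have R3C := congrArg (fun y : ℝ => (y : ℂ)) R3
  have R4C := congrArg (fun y : ℝ => (y : ℂ)) R4
  have R5C := congrArg (fun y : ℝ => (y : ℂ)) R5
  push_cast at R1C R2C R3C R4C R5C
  refine master (Complex.I * (k:ℝ)) (-(Complex.I * (k:ℝ) * (c0:ℝ))) (-(Complex.I * (k:ℝ) * (ξ0:ℝ)))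
    (Complex.I * (κ:ℝ)) (-(Complex.I * (κ:ℝ) * (c:ℝ))) (-(Complex.I * (κ:ℝ) * (η0:ℝ)))
    ((α * e1 : ℝ) : ℂ) ((α * e2 : ℝ) : ℂ) ((e1 * e2 : ℝ) : ℂ)
    ((α * e1⁻¹ : ℝ) : ℂ) ((α * e2⁻¹ : ℝ) : ℂ) ((e1⁻¹ * e2⁻¹ : ℝ) : ℂ)
    ?_ ?_ ?_ ?_ ?_ f f' ?_ ?_
  · push_cast
    linear_combination (-(Complex.I^2)) * R1C
  · push_cast
    linear_combination (-(Complex.I^2)) * R2C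
  · push_cast
    linear_combination (-(Complex.I^2)) * R3C
  · push_cast
    linear_combination (-(Complex.I^2)) * R4C
  · push_cast
    linear_combination (-(Complex.I^2)) * R5C
  · -- shape of f
    intro x t
    rw [hf x t]
    rw [show Complex.I * ((k:ℝ) * ((x:ℝ) - (c0:ℝ) * (t:ℝ) - (ξ0:ℝ))) + ((φ:ℝ):ℂ)
        = (Complex.I * (k:ℝ) * (x:ℝ) + -(Complex.I * (k:ℝ) * (c0:ℝ)) * (t:ℝ)
          + -(Complex.I * (k:ℝ) * (ξ0:ℝ))) + ((φ:ℝ):ℂ) from by push_cast; ring,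
      Complex.exp_add,
      show Complex.I * ((κ:ℝ) * ((x:ℝ) - (c:ℝ) * (t:ℝ) - (η0:ℝ))) + ((ψ:ℝ):ℂ)
        = (Complex.I * (κ:ℝ) * (x:ℝ) + -(Complex.I * (κ:ℝ) * (c:ℝ)) * (t:ℝ)
          + -(Complex.I * (κ:ℝ) * (η0:ℝ))) + ((ψ:ℝ):ℂ) from by push_cast; ring,
      Complex.exp_add,
      show Complex.I * ((k:ℝ) * ((x:ℝ) - (c0:ℝ) * (t:ℝ) - (ξ0:ℝ)))
          + Complex.I * ((κ:ℝ) * ((x:ℝ) - (c:ℝ) * (t:ℝ) - (η0:ℝ))) + ((φ:ℝ):ℂ) + ((ψ:ℝ):ℂ)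
        = ((Complex.I * (k:ℝ) + Complex.I * (κ:ℝ)) * (x:ℝ)
            + (-(Complex.I * (k:ℝ) * (c0:ℝ)) + -(Complex.I * (κ:ℝ) * (c:ℝ))) * (t:ℝ)
            + (-(Complex.I * (k:ℝ) * (ξ0:ℝ)) + -(Complex.I * (κ:ℝ) * (η0:ℝ))) + ((φ:ℝ):ℂ))
          + ((ψ:ℝ):ℂ) from by push_cast; ring,
      Complex.exp_add, Complex.exp_add, he1def, he2def]
    push_cast
    simp only [Complex.exp_add, Complex.exp_sub, Complex.exp_neg]
    ring
  · -- shape of f'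
    intro x t
    rw [hf' x t]
    rw [show Complex.I * ((k:ℝ) * ((x:ℝ) - (c0:ℝ) * (t:ℝ) - (ξ0:ℝ))) - ((φ:ℝ):ℂ)
        = (Complex.I * (k:ℝ) * (x:ℝ) + -(Complex.I * (k:ℝ) * (c0:ℝ)) * (t:ℝ)
          + -(Complex.I * (k:ℝ) * (ξ0:ℝ))) + -((φ:ℝ):ℂ) from by push_cast; ring,
      Complex.exp_add,
      show Complex.I * ((κ:ℝ) * ((x:ℝ) - (c:ℝ) * (t:ℝ) - (η0:ℝ))) - ((ψ:ℝ):ℂ)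
        = (Complex.I * (κ:ℝ) * (x:ℝ) + -(Complex.I * (κ:ℝ) * (c:ℝ)) * (t:ℝ)
          + -(Complex.I * (κ:ℝ) * (η0:ℝ))) + -((ψ:ℝ):ℂ) from by push_cast; ring,
      Complex.exp_add,
      show Complex.I * ((k:ℝ) * ((x:ℝ) - (c0:ℝ) * (t:ℝ) - (ξ0:ℝ)))
          + Complex.I * ((κ:ℝ) * ((x:ℝ) - (c:ℝ) * (t:ℝ) - (η0:ℝ))) - ((φ:ℝ):ℂ) - ((ψ:ℝ):ℂ)
        = ((Complex.I * (k:ℝ) + Complex.I * (κ:ℝ)) * (x:ℝ)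
            + (-(Complex.I * (k:ℝ) * (c0:ℝ)) + -(Complex.I * (κ:ℝ) * (c:ℝ))) * (t:ℝ)
            + (-(Complex.I * (k:ℝ) * (ξ0:ℝ)) + -(Complex.I * (κ:ℝ) * (η0:ℝ))) + -((φ:ℝ):ℂ))
          + -((ψ:ℝ):ℂ) from by push_cast; ring,
      Complex.exp_add, Complex.exp_add, Complex.exp_neg, Complex.exp_neg, he1def, he2def]
    push_cast
    simp only [Complex.exp_add, Complex.exp_sub, Complex.exp_neg]
    ring
end

section
/- Let k > 0, c0 > 0, c > 0 be real with (c − c0)² > k², and set β = 2ck/((c − c0)² − k²). For ψ > 0 define κ(ψ) = c·tanh(ψ) and α(ψ) = sqrt(((c − c0)² − (κ(ψ) + k)²)/((c − c0)² − (κ(ψ) − k)²)). Then lim_{ψ → 0⁺} (α(ψ) − 1)/ψ = −β. -/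
/-! At `ψ = 0` the radicand equals `1`, so `α(0) = 1` and the limit is the derivative `α'(0)`.
By the chain rule it is `κ'(0) = c` times the derivative at `0` of
`x ↦ √((D - (x + k)²)/(D - (x - k)²))` with `D = (c - c0)²`, which is `-2k/(D - k²)`. -/

open Filter Topology

theorem Real.hasDerivAt_tanh (x : ℝ) : HasDerivAt Real.tanh (Real.cosh x ^ 2)⁻¹ x := by
  have hcosh : Real.cosh x ≠ 0 := (Real.cosh_pos x).ne'
  have h := (Real.hasDerivAt_sinh x).div (Real.hasDerivAt_cosh x) hcosh
  have htanh : Real.sinh / Real.cosh = Real.tanh := by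
    funext y; rw [Pi.div_apply, Real.tanh_eq_sinh_div_cosh]
  rwa [htanh, ← sq, ← sq, Real.cosh_sq_sub_sinh_sq, one_div] at h

theorem HasDerivAt.tendsto_sub_div_nhdsGT_zero {f : ℝ → ℝ} {f' : ℝ} (hf : HasDerivAt f f' 0) :
    Tendsto (fun x => (f x - f 0) / x) (𝓝[>] 0) (𝓝 f') := by
  refine hf.tendsto_slope_zero_right.congr fun x => ?_
  simp [div_eq_inv_mul]

theorem hasDerivAt_sqrt_shifted_ratio {D k : ℝ} (hD : D - k ^ 2 ≠ 0) :
    HasDerivAt (fun x => √((D - (x + k) ^ 2) / (D - (x - k) ^ 2))) (-(2 * k / (D - k ^ 2))) 0 := by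
  have hnum : HasDerivAt (fun x => D - (x + k) ^ 2) (-(2 * k)) 0 := by
    simpa using (((hasDerivAt_id (0 : ℝ)).add_const k).pow 2).const_sub D
  have hden : HasDerivAt (fun x => D - (x - k) ^ 2) (2 * k) 0 := by
    simpa using (((hasDerivAt_id (0 : ℝ)).sub_const k).pow 2).const_sub D
  have hden0 : D - ((0 : ℝ) - k) ^ 2 ≠ 0 := by simpa using hD
  have hratio0 : (D - ((0 : ℝ) + k) ^ 2) / (D - (0 - k) ^ 2) = 1 := by
    simpa using div_self hD
  convert (hnum.fun_div hden hden0).sqrt (by rw [hratio0]; exact one_ne_zero) using 1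
  rw [hratio0, Real.sqrt_one]
  field_simp
  ring

theorem alpha_expansion_limit_general (k c0 c β : ℝ)
    (hcon : (c - c0) ^ 2 > k ^ 2)
    (hβ : β = 2 * c * k / ((c - c0) ^ 2 - k ^ 2))
    (κ α : ℝ → ℝ)
    (hκ : ∀ ψ : ℝ, κ ψ = c * Real.tanh ψ)
    (hα : ∀ ψ : ℝ, α ψ =
      Real.sqrt (((c - c0) ^ 2 - (κ ψ + k) ^ 2) / ((c - c0) ^ 2 - (κ ψ - k) ^ 2))) :
    Filter.Tendsto (fun ψ : ℝ => (α ψ - 1) / ψ)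
      (nhdsWithin 0 (Set.Ioi 0)) (nhds (-β)) := by
  have hD : (c - c0) ^ 2 - k ^ 2 ≠ 0 := (sub_pos.mpr hcon).ne'
  have hκ0 : κ 0 = 0 := by simp [hκ]
  have hκ' : HasDerivAt κ c 0 := by
    simpa [funext hκ] using (Real.hasDerivAt_tanh 0).const_mul c
  have hα' : HasDerivAt α (-β) 0 := by
    have h := (hκ0 ▸ hasDerivAt_sqrt_shifted_ratio hD).comp 0 hκ'
    rw [hβ]
    exact (h.congr_deriv (by ring)).congr_of_eventuallyEq (.of_forall hα)
  have hα0 : α 0 = 1 := by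
    simp [hα, hκ0, div_self hD]
  simpa [hα0] using hα'.tendsto_sub_div_nhdsGT_zero

/-- leading-order expansion `α = 1 − βψ + O(ψ²)` of the interaction
coefficient of the 2-periodic solution of the Benjamin–Ono equation in the
degeneration limit `ψ → 0⁺` with `κ = c·tanh ψ`:
`lim_{ψ → 0⁺} (α(ψ) − 1)/ψ = −β` with `β = 2ck/((c − c0)² − k²)`. -/
theorem alpha_expansion_limit (k c0 c β : ℝ) (hk : 0 < k) (hc0 : 0 < c0) (hc : 0 < c)
    (hcon : (c - c0) ^ 2 > k ^ 2)
    (hβ : β = 2 * c * k / ((c - c0) ^ 2 - k ^ 2))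
    (κ α : ℝ → ℝ)
    (hκ : ∀ ψ : ℝ, κ ψ = c * Real.tanh ψ)
    (hα : ∀ ψ : ℝ, α ψ =
      Real.sqrt (((c - c0) ^ 2 - (κ ψ + k) ^ 2) / ((c - c0) ^ 2 - (κ ψ - k) ^ 2))) :
    Filter.Tendsto (fun ψ : ℝ => (α ψ - 1) / ψ)
      (nhdsWithin 0 (Set.Ioi 0)) (nhds (-β)) :=
  alpha_expansion_limit_general k c0 c β hcon hβ κ α hκ hα
end

section
/- Let k > 0, φ > 0, set c0 = k·coth(φ), and let c > 0 satisfy (c − c0)² > k². Set β = 2ck/((c − c0)² − k²). For ξ0, η0 ∈ ℝ write ξ = x − c0·t − ξ0 and η = x − c·t − η0, and define f(x,t) = β(1 − e^{i k ξ + φ}) − (1 + i c η)(1 + e^{i k ξ + φ}) and f'(x,t) = β(1 − e^{i k ξ − φ}) + (1 − i c η)(1 + e^{i k ξ − φ}). Then f and f' satisfy the Hirota bilinear equation i(∂_t f' · f − f' · ∂_t f) = ∂_x² f' · f − 2 ∂_x f' · ∂_x f + f' · ∂_x² f at every real (x,t). -/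
open Complex

def tauProfile (β σ u e : ℂ) : ℂ := β * (1 - e) - (σ + u) * (1 + e)

/-- The derivative of `y ↦ tauProfile β σ (u y) (e y)` when `u' = a` and `e' = l e`. -/
def tauProfileDeriv (β σ u e a l : ℂ) : ℂ := -l * (β + σ + u) * e - a * (1 + e)

/-- The derivative of `y ↦ tauProfileDeriv β σ (u y) (e y) a l` when `u' = a` and `e' = l e`. -/
def tauProfileDeriv2 (β σ u e a l : ℂ) : ℂ := -l * (l * (β + σ + u) + 2 * a) * e

theorem tauProfile_hirota {k c0 c β : ℂ} (u ep em : ℂ) (hcoth : c0 * (ep - em) = k * (ep + em))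
    (hdisp : β * ((c - c0) ^ 2 - k ^ 2) = 2 * c * k) :
    I * (tauProfileDeriv β (-1) u em (-I * c * c) (-I * k * c0) * tauProfile β 1 u ep
        - tauProfile β (-1) u em * tauProfileDeriv β 1 u ep (-I * c * c) (-I * k * c0)) =
      tauProfileDeriv2 β (-1) u em (I * c) (I * k) * tauProfile β 1 u ep
        - 2 * tauProfileDeriv β (-1) u em (I * c) (I * k) * tauProfileDeriv β 1 u ep (I * c) (I * k)
        + tauProfile β (-1) u em * tauProfileDeriv2 β 1 u ep (I * c) (I * k) := by
  unfold tauProfile tauProfileDeriv tauProfileDeriv2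
  linear_combination (norm := (ring_nf; simp only [I_sq]; ring))
    (-k * u ^ 2 + 4 * c * β + k * (β ^ 2 + 1) - 2 * c0 * β) * hcoth + 2 * (ep - em) * hdisp

section Derivatives

variable {β σ a l : ℂ} {u e : ℝ → ℂ}

theorem hasDerivAt_tauProfile {y : ℝ} (hu : HasDerivAt u a y) (he : HasDerivAt e (l * e y) y) :
    HasDerivAt (fun y => tauProfile β σ (u y) (e y)) (tauProfileDeriv β σ (u y) (e y) a l) y := by
  have h := ((he.const_sub 1).const_mul β).sub ((hu.const_add σ).mul (he.const_add 1))
  exact h.congr_deriv (by unfold tauProfileDeriv; ring)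

theorem deriv_tauProfile (hu : ∀ y, HasDerivAt u a y) (he : ∀ y, HasDerivAt e (l * e y) y) :
    deriv (fun y => tauProfile β σ (u y) (e y)) = fun y => tauProfileDeriv β σ (u y) (e y) a l :=
  funext fun y => (hasDerivAt_tauProfile (hu y) (he y)).deriv

theorem deriv_tauProfileDeriv (hu : ∀ y, HasDerivAt u a y)
    (he : ∀ y, HasDerivAt e (l * e y) y) :
    deriv (fun y => tauProfileDeriv β σ (u y) (e y) a l) =
      fun y => tauProfileDeriv2 β σ (u y) (e y) a l := by
  funext y
  have h := ((((hu y).const_add (β + σ)).const_mul (-l)).mul (he y)).sub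
    (((he y).const_add 1).const_mul a)
  exact (h.congr_deriv (by unfold tauProfileDeriv2; ring)).deriv

end Derivatives

def travellingPhase (A v x0 x t : ℝ) : ℂ := I * (A * (x - v * t - x0))

theorem hasDerivAt_travellingPhase_space (A v x0 t y : ℝ) :
    HasDerivAt (fun y => travellingPhase A v x0 y t) (I * A) y := by
  have h := ((((hasDerivAt_id y).ofReal_comp.sub_const ((v : ℂ) * t)).sub_const
    (x0 : ℂ)).const_mul (A : ℂ)).const_mul I
  exact h.congr_deriv (by simp)

theorem hasDerivAt_travellingPhase_time (A v x0 x s : ℝ) :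
    HasDerivAt (fun s => travellingPhase A v x0 x s) (-I * A * v) s := by
  have h := (((((hasDerivAt_id s).ofReal_comp.const_mul (v : ℂ)).const_sub (x : ℂ)).sub_const
    (x0 : ℂ)).const_mul (A : ℂ)).const_mul I
  exact h.congr_deriv (by simp; ring)

theorem hasDerivAt_cexp_travellingPhase_space (A v x0 t : ℝ) (ψ : ℂ) (y : ℝ) :
    HasDerivAt (fun y => cexp (travellingPhase A v x0 y t + ψ))
      (I * A * cexp (travellingPhase A v x0 y t + ψ)) y :=
  (((hasDerivAt_travellingPhase_space A v x0 t y).add_const ψ).cexp).congr_deriv (mul_comm _ _)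

theorem hasDerivAt_cexp_travellingPhase_time (A v x0 x : ℝ) (ψ : ℂ) (s : ℝ) :
    HasDerivAt (fun s => cexp (travellingPhase A v x0 x s + ψ))
      (-I * A * v * cexp (travellingPhase A v x0 x s + ψ)) s :=
  (((hasDerivAt_travellingPhase_time A v x0 x s).add_const ψ).cexp).congr_deriv (mul_comm _ _)

theorem cexp_coth_relation {c0 k φ : ℝ} (hcoth : c0 * Real.sinh φ = k * Real.cosh φ)
    (z : ℂ) :
    c0 * (cexp (z + φ) - cexp (z + -φ)) = k * (cexp (z + φ) + cexp (z + -φ)) := by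
  have h : (c0 : ℂ) * Complex.sinh φ = k * Complex.cosh φ := by exact_mod_cast hcoth
  rw [Complex.sinh, Complex.cosh] at h
  rw [exp_add, exp_add]
  linear_combination 2 * cexp z * h

section Breather

variable (k c0 ξ0 c η0 β : ℝ)

noncomputable def breatherTau (σ ψ : ℂ) (x t : ℝ) : ℂ :=
  tauProfile β σ (travellingPhase c c η0 x t) (cexp (travellingPhase k c0 ξ0 x t + ψ))

variable (σ ψ : ℂ) (x t : ℝ)

theorem deriv_breatherTau_space :
    deriv (fun y => breatherTau k c0 ξ0 c η0 β σ ψ y t) = fun y =>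
      tauProfileDeriv β σ (travellingPhase c c η0 y t) (cexp (travellingPhase k c0 ξ0 y t + ψ))
        (I * c) (I * k) :=
  deriv_tauProfile (hasDerivAt_travellingPhase_space c c η0 t)
    (hasDerivAt_cexp_travellingPhase_space k c0 ξ0 t ψ)

theorem deriv_deriv_breatherTau_space :
    deriv (fun y => deriv (fun z => breatherTau k c0 ξ0 c η0 β σ ψ z t) y) = fun y =>
      tauProfileDeriv2 β σ (travellingPhase c c η0 y t) (cexp (travellingPhase k c0 ξ0 y t + ψ))
        (I * c) (I * k) := by
  simp only [deriv_breatherTau_space]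
  exact deriv_tauProfileDeriv (hasDerivAt_travellingPhase_space c c η0 t)
    (hasDerivAt_cexp_travellingPhase_space k c0 ξ0 t ψ)

theorem deriv_breatherTau_time :
    deriv (fun s => breatherTau k c0 ξ0 c η0 β σ ψ x s) = fun s =>
      tauProfileDeriv β σ (travellingPhase c c η0 x s) (cexp (travellingPhase k c0 ξ0 x s + ψ))
        (-I * c * c) (-I * k * c0) :=
  deriv_tauProfile (hasDerivAt_travellingPhase_time c c η0 x)
    (hasDerivAt_cexp_travellingPhase_time k c0 ξ0 x ψ)

theorem hirotaBO_breatherTau {φ : ℝ} (hcoth : c0 * Real.sinh φ = k * Real.cosh φ)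
    (hdisp : β * ((c - c0) ^ 2 - k ^ 2) = 2 * c * k) :
    HirotaBO (breatherTau k c0 ξ0 c η0 β 1 φ) (breatherTau k c0 ξ0 c η0 β (-1) (-φ)) := by
  intro x t
  have hdispC : (β : ℂ) * ((c - c0) ^ 2 - k ^ 2) = 2 * c * k := by exact_mod_cast hdisp
  rw [deriv_deriv_breatherTau_space, deriv_deriv_breatherTau_space]
  simp only [deriv_breatherTau_space, deriv_breatherTau_time]
  exact tauProfile_hirota _ _ _ (cexp_coth_relation hcoth _) hdispC

end Breather

theorem hirota_breather_general (k φ ξ0 η0 c0 c β : ℝ) (hφ : 0 < φ)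
    (hc0 : c0 = k * Real.cosh φ / Real.sinh φ)
    (hcon : (c - c0) ^ 2 > k ^ 2)
    (hβ : β = 2 * c * k / ((c - c0) ^ 2 - k ^ 2))
    (f f' : ℝ → ℝ → ℂ)
    (hf : ∀ x t : ℝ, f x t =
      β * (1 - Complex.exp (Complex.I * (k * (x - c0 * t - ξ0)) + φ))
        - (1 + Complex.I * (c * (x - c * t - η0)))
            * (1 + Complex.exp (Complex.I * (k * (x - c0 * t - ξ0)) + φ)))
    (hf' : ∀ x t : ℝ, f' x t =
      β * (1 - Complex.exp (Complex.I * (k * (x - c0 * t - ξ0)) - φ))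
        + (1 - Complex.I * (c * (x - c * t - η0)))
            * (1 + Complex.exp (Complex.I * (k * (x - c0 * t - ξ0)) - φ))) :
    HirotaBO f f' := by
  have hcoth : c0 * Real.sinh φ = k * Real.cosh φ := by
    rw [hc0]
    field_simp [(Real.sinh_pos_iff.mpr hφ).ne']
  have hdisp : β * ((c - c0) ^ 2 - k ^ 2) = 2 * c * k := by
    rw [hβ]
    field_simp [(sub_pos.mpr hcon).ne']
  have hf_eq : f = breatherTau k c0 ξ0 c η0 β 1 φ := funext₂ hf
  have hf'_eq : f' = breatherTau k c0 ξ0 c η0 β (-1) (-φ) := by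
    funext x t
    simp only [hf', breatherTau, tauProfile, travellingPhase, ← sub_eq_add_neg]
    ring
  rw [hf_eq, hf'_eq]
  exact hirotaBO_breatherTau k c0 ξ0 c η0 β hcoth hdisp

/-- the tau functions of the single-breather solution of the
Benjamin–Ono equation on the traveling periodic wave background satisfy the
Hirota bilinear equation. -/
theorem hirota_breather (k φ ξ0 η0 c0 c β : ℝ) (hk : 0 < k) (hφ : 0 < φ)
    (hc0 : c0 = k * Real.cosh φ / Real.sinh φ)
    (hc : 0 < c) (hcon : (c - c0) ^ 2 > k ^ 2)
    (hβ : β = 2 * c * k / ((c - c0) ^ 2 - k ^ 2))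
    (f f' : ℝ → ℝ → ℂ)
    (hf : ∀ x t : ℝ, f x t =
      β * (1 - Complex.exp (Complex.I * (k * (x - c0 * t - ξ0)) + φ))
        - (1 + Complex.I * (c * (x - c * t - η0)))
            * (1 + Complex.exp (Complex.I * (k * (x - c0 * t - ξ0)) + φ)))
    (hf' : ∀ x t : ℝ, f' x t =
      β * (1 - Complex.exp (Complex.I * (k * (x - c0 * t - ξ0)) - φ))
        + (1 - Complex.I * (c * (x - c * t - η0)))
            * (1 + Complex.exp (Complex.I * (k * (x - c0 * t - ξ0)) - φ))) :
    HirotaBO f f' :=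
  hirota_breather_general k φ ξ0 η0 c0 c β hφ hc0 hcon hβ f f' hf hf'
end

section
/- Let k > 0, φ > 0, set c0 = k·coth(φ), and let c > 0 satisfy (c − c0)² > k². Set β = 2ck/((c − c0)² − k²). For ξ0, η0 ∈ ℝ write ξ = x − c0·t − ξ0 and η = x − c·t − η0, and define f(x,t) = β(1 − e^{i k ξ + φ}) − (1 + i c η)(1 + e^{i k ξ + φ}) and f'(x,t) = β(1 − e^{i k ξ − φ}) + (1 − i c η)(1 + e^{i k ξ − φ}). Then for every real (x,t) one has f'(x,t) = −e^{i k ξ − φ} · conj(f(x,t)), where conj denotes complex conjugation. -/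
/-- the conjugation symmetry `f' = −e^{i k ξ − φ} · conj(f)` of the
single-breather tau functions of the Benjamin–Ono equation. -/
theorem breather_tau_conjugation (k φ ξ0 η0 c0 c β : ℝ) (hk : 0 < k) (hφ : 0 < φ)
    (hc0 : c0 = k * Real.cosh φ / Real.sinh φ)
    (hc : 0 < c) (hcon : (c - c0) ^ 2 > k ^ 2)
    (hβ : β = 2 * c * k / ((c - c0) ^ 2 - k ^ 2))
    (f f' : ℝ → ℝ → ℂ)
    (hf : ∀ x t : ℝ, f x t =
      β * (1 - Complex.exp (Complex.I * (k * (x - c0 * t - ξ0)) + φ))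
        - (1 + Complex.I * (c * (x - c * t - η0)))
            * (1 + Complex.exp (Complex.I * (k * (x - c0 * t - ξ0)) + φ)))
    (hf' : ∀ x t : ℝ, f' x t =
      β * (1 - Complex.exp (Complex.I * (k * (x - c0 * t - ξ0)) - φ))
        + (1 - Complex.I * (c * (x - c * t - η0)))
            * (1 + Complex.exp (Complex.I * (k * (x - c0 * t - ξ0)) - φ))) :
    ∀ x t : ℝ,
      f' x t = -Complex.exp (Complex.I * (k * (x - c0 * t - ξ0)) - φ)
          * (starRingEnd ℂ) (f x t) := by
  intro x t
  rw [hf', hf]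
  set a : ℂ := Complex.I * (k * (x - c0 * t - ξ0)) with ha
  have hconj : (starRingEnd ℂ) (Complex.exp (a + φ)) = (Complex.exp (a - φ))⁻¹ := by
    rw [← Complex.exp_conj, ← Complex.exp_neg]
    congr 1
    simp [ha, Complex.conj_I]
    ring
  simp only [map_sub, map_add, map_mul, map_one, Complex.conj_I, Complex.conj_ofReal, hconj]
  field_simp [Complex.exp_ne_zero]
  ring
end

section
/- Let k > 0, φ > 0, set c0 = k·coth(φ), and let c > 0 satisfy (c − c0)² > k². Set β = 2ck/((c − c0)² − k²). For ξ0, η0 ∈ ℝ write ξ = x − c0·t − ξ0 and η = x − c·t − η0, and define f(x,t) = β(1 − e^{i k ξ + φ}) − (1 + i c η)(1 + e^{i k ξ + φ}), f'(x,t) = β(1 − e^{i k ξ − φ}) + (1 − i c η)(1 + e^{i k ξ − φ}). Define N(x,t) = 2(c + kβ)cosh(φ) + [k(1 + β² + c²η²) + 2βc]·sinh(φ) + 2c·cos(kξ) and D(x,t) = (1 + β² + c²η²)cosh(φ) + 2β·sinh(φ) + (1 − β² + c²η²)cos(kξ) + 2βcη·sin(kξ). Then for every real (x,t) one has i·(∂_x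 f' · f − f' · ∂_x f)·D(x,t) = N(x,t)·f'(x,t)·f(x,t); that is, the Hirota form i ∂_x log(f'/f) equals the explicit breather formula N/D wherever f·f' ≠ 0. -/
set_option maxRecDepth 8000
set_option maxHeartbeats 1600000

private lemma breather_key (j s co e ei eta beta c k ch sh : ℂ)
    (hj : j ^ 2 = -1) (hsc : s ^ 2 + co ^ 2 = 1) (he : e * ei = 1)
    (hch : ch = (e + ei) / 2) (hsh : sh = (e - ei) / 2) :
    j * ((beta * -((co + s * j) * ei * (j * (k * 1)))
          + (-(j * (c * 1)) * (1 + (co + s * j) * ei)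
             + (1 - j * (c * eta)) * ((co + s * j) * ei * (j * (k * 1)))))
        * (beta * (1 - (co + s * j) * e) - (1 + j * (c * eta)) * (1 + (co + s * j) * e))
      - (beta * (1 - (co + s * j) * ei) + (1 - j * (c * eta)) * (1 + (co + s * j) * ei))
        * (beta * -((co + s * j) * e * (j * (k * 1)))
           - (j * (c * 1) * (1 + (co + s * j) * e)
              + (1 + j * (c * eta)) * ((co + s * j) * e * (j * (k * 1))))))
      * ((1 + beta ^ 2 + c ^ 2 * eta ^ 2) * ch + 2 * beta * sh
          + (1 - beta ^ 2 + c ^ 2 * eta ^ 2) * co + 2 * beta * c * eta * s)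
    = (2 * (c + k * beta) * ch + (k * (1 + beta ^ 2 + c ^ 2 * eta ^ 2) + 2 * beta * c) * sh
        + 2 * c * co)
      * (beta * (1 - (co + s * j) * ei) + (1 - j * (c * eta)) * (1 + (co + s * j) * ei))
      * (beta * (1 - (co + s * j) * e) - (1 + j * (c * eta)) * (1 + (co + s * j) * e)) := by
  subst hch hsh
  linear_combination ((1)*ei*c + (-2)*ei*beta*c + (1)*ei*beta^2*c + (1/2)*ei*eta^2*c^2*k + (-1)*ei*eta^2*beta*c^2*k + (1)*ei*eta^2*beta*c^3 + (1/2)*ei*eta^2*beta^2*c^2*k + (1/2)*ei*eta^4*c^4*k + (1)*e*c + (2)*e*beta*c + (1)*e*beta^2*c + (-1/2)*e*eta^2*c^2*k + (-1)*e*eta^2*beta*c^2*k + (-1)*e*eta^2*beta*c^3 + (-1/2)*e*eta^2*beta^2*c^2*k + (-1/2)*e*eta^4*c^4*k + (2)*co*c + (-2)*co*beta^2*c + (-1/2)*co*ei^2*k + (1)*co*ei^2*c + (2)*co*ei^2*beta*k + (-3)*co*ei^2*beta*c + (-3)*co*ei^2*beta^2*k + (3)*co*ei^2*beta^2*c + (2)*co*ei^2*beta^3*k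 + (-1)*co*ei^2*beta^3*c + (-1/2)*co*ei^2*beta^4*k + (-1/2)*co*ei^2*eta^2*c^2*k + (1)*co*ei^2*eta^2*beta*c^2*k + (-1/2)*co*ei^2*eta^2*beta^2*c^2*k + (2)*co*e*ei*c + (-2)*co*e*ei*beta^2*c + (-2)*co*e*ei*eta^2*beta*c^2*k + (1/2)*co*e^2*k + (1)*co*e^2*c + (2)*co*e^2*beta*k + (3)*co*e^2*beta*c + (3)*co*e^2*beta^2*k + (3)*co*e^2*beta^2*c + (2)*co*e^2*beta^3*k + (1)*co*e^2*beta^3*c + (1/2)*co*e^2*beta^4*k + (1/2)*co*e^2*eta^2*c^2*k + (1)*co*e^2*eta^2*beta*c^2*k + (1/2)*co*e^2*eta^2*beta^2*c^2*k + (-1)*co^2*ei*k + (2)*co^2*ei*c + (2)*co^2*ei*beta*k + (-2)*co^2*ei*beta*c + (-2)*co^2*ei*beta^2*c + (-2)*co^2*ei*beta^3*k + (2)*co^2*ei*beta^3*c + (1)*co^2*ei*beta^4*k + (-2)*co^2*ei*eta^2*c^2*k + (2)*co^2*ei*eta^2*beta*c^2*k + (-2)*co^2*ei*eta^2*beta*c^3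 + (-1)*co^2*ei*eta^4*c^4*k + (1)*co^2*e*k + (2)*co^2*e*c + (2)*co^2*e*beta*k + (2)*co^2*e*beta*c + (-2)*co^2*e*beta^2*c + (-2)*co^2*e*beta^3*k + (-2)*co^2*e*beta^3*c + (-1)*co^2*e*beta^4*k + (2)*co^2*e*eta^2*c^2*k + (2)*co^2*e*eta^2*beta*c^2*k + (2)*co^2*e*eta^2*beta*c^3 + (1)*co^2*e*eta^4*c^4*k + (1)*co^2*e*ei^2*c + (-2)*co^2*e*ei^2*beta*c + (1)*co^2*e*ei^2*beta^2*c + (1/2)*co^2*e*ei^2*eta^2*c^2*k + (-1)*co^2*e*ei^2*eta^2*beta*c^2*k + (1)*co^2*e*ei^2*eta^2*beta*c^3 + (1/2)*co^2*e*ei^2*eta^2*beta^2*c^2*k + (1/2)*co^2*e*ei^2*eta^4*c^4*k + (1)*co^2*e^2*ei*c + (2)*co^2*e^2*ei*beta*c + (1)*co^2*e^2*ei*beta^2*c + (-1/2)*co^2*e^2*ei*eta^2*c^2*k + (-1)*co^2*e^2*ei*eta^2*beta*c^2*k + (-1)*co^2*e^2*ei*eta^2*beta*c^3 + (-1/2)*co^2*e^2*ei*eta^2*beta^2*c^2*k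 + (-1/2)*co^2*e^2*ei*eta^4*c^4*k + (2)*co^3*e*ei*c + (-2)*co^3*e*ei*beta^2*c + (4)*s*eta*beta*c^2 + (-2)*s*co*ei*eta*beta*c*k + (4)*s*co*ei*eta*beta*c^2 + (4)*s*co*ei*eta*beta^2*c*k + (-4)*s*co*ei*eta*beta^2*c^2 + (-2)*s*co*ei*eta*beta^3*c*k + (-2)*s*co*ei*eta^3*beta*c^3*k + (2)*s*co*e*eta*beta*c*k + (4)*s*co*e*eta*beta*c^2 + (4)*s*co*e*eta*beta^2*c*k + (4)*s*co*e*eta*beta^2*c^2 + (2)*s*co*e*eta*beta^3*c*k + (2)*s*co*e*eta^3*beta*c^3*k + (2)*s*co*e*ei^2*eta*beta*c*k + (-4)*s*co*e*ei^2*eta*beta*c^2 + (-4)*s*co*e*ei^2*eta*beta^2*c*k + (4)*s*co*e*ei^2*eta*beta^2*c^2 + (2)*s*co*e*ei^2*eta*beta^3*c*k + (2)*s*co*e*ei^2*eta^3*beta*c^3*k + (-2)*s*co*e^2*ei*eta*beta*c*k + (-4)*s*co*e^2*ei*eta*beta*c^2 + (-4)*s*co*e^2*ei*eta*beta^2*c*k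 + (-4)*s*co*e^2*ei*eta*beta^2*c^2 + (-2)*s*co*e^2*ei*eta*beta^3*c*k + (-2)*s*co*e^2*ei*eta^3*beta*c^3*k + (-4)*s*co^2*e*ei*eta*beta*c^2 + (-1/2)*s^2*e*ei^2*k + (1)*s^2*e*ei^2*beta*k + (1)*s^2*e*ei^2*beta*c + (-2)*s^2*e*ei^2*beta^2*c + (-1)*s^2*e*ei^2*beta^3*k + (1)*s^2*e*ei^2*beta^3*c + (1/2)*s^2*e*ei^2*beta^4*k + (-1)*s^2*e*ei^2*eta^2*c^2*k + (1)*s^2*e*ei^2*eta^2*beta*c^2*k + (-1)*s^2*e*ei^2*eta^2*beta*c^3 + (-1/2)*s^2*e*ei^2*eta^4*c^4*k + (1/2)*s^2*e^2*ei*k + (1)*s^2*e^2*ei*beta*k + (-1)*s^2*e^2*ei*beta*c + (-2)*s^2*e^2*ei*beta^2*c + (-1)*s^2*e^2*ei*beta^3*k + (-1)*s^2*e^2*ei*beta^3*c + (-1/2)*s^2*e^2*ei*beta^4*k + (1)*s^2*e^2*ei*eta^2*c^2*k + (1)*s^2*e^2*ei*eta^2*beta*c^2*k + (1)*s^2*e^2*ei*eta^2*beta*c^3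 + (1/2)*s^2*e^2*ei*eta^4*c^4*k + (-4)*s^3*e*ei*eta*beta*c^2 + (-1/2)*j*s*ei^2*k + (1)*j*s*ei^2*c + (2)*j*s*ei^2*beta*k + (-3)*j*s*ei^2*beta*c + (-3)*j*s*ei^2*beta^2*k + (3)*j*s*ei^2*beta^2*c + (2)*j*s*ei^2*beta^3*k + (-1)*j*s*ei^2*beta^3*c + (-1/2)*j*s*ei^2*beta^4*k + (-1/2)*j*s*ei^2*eta^2*c^2*k + (1)*j*s*ei^2*eta^2*beta*c^2*k + (-1/2)*j*s*ei^2*eta^2*beta^2*c^2*k + (2)*j*s*e*ei*c + (-2)*j*s*e*ei*beta^2*c + (-2)*j*s*e*ei*eta^2*beta*c^2*k + (1/2)*j*s*e^2*k + (1)*j*s*e^2*c + (2)*j*s*e^2*beta*k + (3)*j*s*e^2*beta*c + (3)*j*s*e^2*beta^2*k + (3)*j*s*e^2*beta^2*c + (2)*j*s*e^2*beta^3*k + (1)*j*s*e^2*beta^3*c + (1/2)*j*s*e^2*beta^4*k + (1/2)*j*s*e^2*eta^2*c^2*k + (1)*j*s*e^2*eta^2*beta*c^2*k + (1/2)*j*s*e^2*eta^2*beta^2*c^2*k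 + (-1)*j*s*co*ei*k + (2)*j*s*co*ei*c + (2)*j*s*co*ei*beta*k + (-2)*j*s*co*ei*beta*c + (-2)*j*s*co*ei*beta^2*c + (-2)*j*s*co*ei*beta^3*k + (2)*j*s*co*ei*beta^3*c + (1)*j*s*co*ei*beta^4*k + (-2)*j*s*co*ei*eta^2*c^2*k + (2)*j*s*co*ei*eta^2*beta*c^2*k + (-2)*j*s*co*ei*eta^2*beta*c^3 + (-1)*j*s*co*ei*eta^4*c^4*k + (1)*j*s*co*e*k + (2)*j*s*co*e*c + (2)*j*s*co*e*beta*k + (2)*j*s*co*e*beta*c + (-2)*j*s*co*e*beta^2*c + (-2)*j*s*co*e*beta^3*k + (-2)*j*s*co*e*beta^3*c + (-1)*j*s*co*e*beta^4*k + (2)*j*s*co*e*eta^2*c^2*k + (2)*j*s*co*e*eta^2*beta*c^2*k + (2)*j*s*co*e*eta^2*beta*c^3 + (1)*j*s*co*e*eta^4*c^4*k + (2)*j*s*co*e*ei^2*c + (-4)*j*s*co*e*ei^2*beta*c + (2)*j*s*co*e*ei^2*beta^2*c + (1)*j*s*co*e*ei^2*eta^2*c^2*k + (-2)*j*s*co*e*ei^2*eta^2*beta*c^2*k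 + (2)*j*s*co*e*ei^2*eta^2*beta*c^3 + (1)*j*s*co*e*ei^2*eta^2*beta^2*c^2*k + (1)*j*s*co*e*ei^2*eta^4*c^4*k + (2)*j*s*co*e^2*ei*c + (4)*j*s*co*e^2*ei*beta*c + (2)*j*s*co*e^2*ei*beta^2*c + (-1)*j*s*co*e^2*ei*eta^2*c^2*k + (-2)*j*s*co*e^2*ei*eta^2*beta*c^2*k + (-2)*j*s*co*e^2*ei*eta^2*beta*c^3 + (-1)*j*s*co*e^2*ei*eta^2*beta^2*c^2*k + (-1)*j*s*co*e^2*ei*eta^4*c^4*k + (4)*j*s*co^2*e*ei*c + (-4)*j*s*co^2*e*ei*beta^2*c + (-2)*j*s^2*ei*eta*beta*c*k + (4)*j*s^2*ei*eta*beta*c^2 + (4)*j*s^2*ei*eta*beta^2*c*k + (-4)*j*s^2*ei*eta*beta^2*c^2 + (-2)*j*s^2*ei*eta*beta^3*c*k + (-2)*j*s^2*ei*eta^3*beta*c^3*k + (2)*j*s^2*e*eta*beta*c*k + (4)*j*s^2*e*eta*beta*c^2 + (4)*j*s^2*e*eta*beta^2*c*k + (4)*j*s^2*e*eta*beta^2*c^2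 + (2)*j*s^2*e*eta*beta^3*c*k + (2)*j*s^2*e*eta^3*beta*c^3*k + (1)*j*s^2*e*ei^2*eta*beta*c*k + (-2)*j*s^2*e*ei^2*eta*beta*c^2 + (-2)*j*s^2*e*ei^2*eta*beta^2*c*k + (2)*j*s^2*e*ei^2*eta*beta^2*c^2 + (1)*j*s^2*e*ei^2*eta*beta^3*c*k + (1)*j*s^2*e*ei^2*eta^3*beta*c^3*k + (-1)*j*s^2*e^2*ei*eta*beta*c*k + (-2)*j*s^2*e^2*ei*eta*beta*c^2 + (-2)*j*s^2*e^2*ei*eta*beta^2*c*k + (-2)*j*s^2*e^2*ei*eta*beta^2*c^2 + (-1)*j*s^2*e^2*ei*eta*beta^3*c*k + (-1)*j*s^2*e^2*ei*eta^3*beta*c^3*k + (4)*j*s^2*co*e*ei*eta*beta*c^2 + (1/2)*j^2*co*ei^2*eta^2*c^2*k + (-1)*j^2*co*ei^2*eta^2*beta*c^2*k + (1/2)*j^2*co*ei^2*eta^2*beta^2*c^2*k + (1/2)*j^2*co*ei^2*eta^4*c^4*k + (2)*j^2*co*e*ei*eta^2*beta*c^2*k + (-1/2)*j^2*co*e^2*eta^2*c^2*k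 + (-1)*j^2*co*e^2*eta^2*beta*c^2*k + (-1/2)*j^2*co*e^2*eta^2*beta^2*c^2*k + (-1/2)*j^2*co*e^2*eta^4*c^4*k + (1)*j^2*co^2*ei*eta^2*c^2*k + (-1)*j^2*co^2*ei*eta^2*beta^2*c^2*k + (1)*j^2*co^2*ei*eta^4*c^4*k + (-1)*j^2*co^2*e*eta^2*c^2*k + (1)*j^2*co^2*e*eta^2*beta^2*c^2*k + (-1)*j^2*co^2*e*eta^4*c^4*k + (2)*j^2*s*co*ei*eta^3*beta*c^3*k + (-2)*j^2*s*co*e*eta^3*beta*c^3*k + (1)*j^2*s^2*e*ei^2*c + (-2)*j^2*s^2*e*ei^2*beta*c + (1)*j^2*s^2*e*ei^2*beta^2*c + (1/2)*j^2*s^2*e*ei^2*eta^2*c^2*k + (-1)*j^2*s^2*e*ei^2*eta^2*beta*c^2*k + (1)*j^2*s^2*e*ei^2*eta^2*beta*c^3 + (1/2)*j^2*s^2*e*ei^2*eta^2*beta^2*c^2*k + (1/2)*j^2*s^2*e*ei^2*eta^4*c^4*k + (1)*j^2*s^2*e^2*ei*c + (2)*j^2*s^2*e^2*ei*beta*c +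 (1)*j^2*s^2*e^2*ei*beta^2*c + (-1/2)*j^2*s^2*e^2*ei*eta^2*c^2*k + (-1)*j^2*s^2*e^2*ei*eta^2*beta*c^2*k + (-1)*j^2*s^2*e^2*ei*eta^2*beta*c^3 + (-1/2)*j^2*s^2*e^2*ei*eta^2*beta^2*c^2*k + (-1/2)*j^2*s^2*e^2*ei*eta^4*c^4*k + (2)*j^2*s^2*co*e*ei*c + (-2)*j^2*s^2*co*e*ei*beta^2*c + (4)*j^2*s^3*e*ei*eta*beta*c^2 + (1/2)*j^3*s*ei^2*eta^2*c^2*k + (-1)*j^3*s*ei^2*eta^2*beta*c^2*k + (1/2)*j^3*s*ei^2*eta^2*beta^2*c^2*k + (1/2)*j^3*s*ei^2*eta^4*c^4*k + (2)*j^3*s*e*ei*eta^2*beta*c^2*k + (-1/2)*j^3*s*e^2*eta^2*c^2*k + (-1)*j^3*s*e^2*eta^2*beta*c^2*k + (-1/2)*j^3*s*e^2*eta^2*beta^2*c^2*k + (-1/2)*j^3*s*e^2*eta^4*c^4*k + (1)*j^3*s*co*ei*eta^2*c^2*k + (-1)*j^3*s*co*ei*eta^2*beta^2*c^2*k + (1)*j^3*s*co*ei*eta^4*c^4*k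 + (-1)*j^3*s*co*e*eta^2*c^2*k + (1)*j^3*s*co*e*eta^2*beta^2*c^2*k + (-1)*j^3*s*co*e*eta^4*c^4*k + (2)*j^3*s^2*ei*eta^3*beta*c^3*k + (-2)*j^3*s^2*e*eta^3*beta*c^3*k) * hj + ((1/2)*e*ei^2*k + (-1)*e*ei^2*beta*k + (-1)*e*ei^2*beta*c + (2)*e*ei^2*beta^2*c + (1)*e*ei^2*beta^3*k + (-1)*e*ei^2*beta^3*c + (-1/2)*e*ei^2*beta^4*k + (1)*e*ei^2*eta^2*c^2*k + (-1)*e*ei^2*eta^2*beta*c^2*k + (1)*e*ei^2*eta^2*beta*c^3 + (1/2)*e*ei^2*eta^4*c^4*k + (-1/2)*e^2*ei*k + (-1)*e^2*ei*beta*k + (1)*e^2*ei*beta*c + (2)*e^2*ei*beta^2*c + (1)*e^2*ei*beta^3*k + (1)*e^2*ei*beta^3*c + (1/2)*e^2*ei*beta^4*k + (-1)*e^2*ei*eta^2*c^2*k + (-1)*e^2*ei*eta^2*beta*c^2*k + (-1)*e^2*ei*eta^2*beta*c^3 + (-1/2)*e^2*ei*eta^4*c^4*k + (4)*s*e*ei*eta*beta*c^2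 + (2)*j*ei*eta*beta*c*k + (-4)*j*ei*eta*beta*c^2 + (-4)*j*ei*eta*beta^2*c*k + (4)*j*ei*eta*beta^2*c^2 + (2)*j*ei*eta*beta^3*c*k + (2)*j*ei*eta^3*beta*c^3*k + (-2)*j*e*eta*beta*c*k + (-4)*j*e*eta*beta*c^2 + (-4)*j*e*eta*beta^2*c*k + (-4)*j*e*eta*beta^2*c^2 + (-2)*j*e*eta*beta^3*c*k + (-2)*j*e*eta^3*beta*c^3*k + (-1)*j*e*ei^2*eta*beta*c*k + (2)*j*e*ei^2*eta*beta*c^2 + (2)*j*e*ei^2*eta*beta^2*c*k + (-2)*j*e*ei^2*eta*beta^2*c^2 + (-1)*j*e*ei^2*eta*beta^3*c*k + (-1)*j*e*ei^2*eta^3*beta*c^3*k + (1)*j*e^2*ei*eta*beta*c*k + (2)*j*e^2*ei*eta*beta*c^2 + (2)*j*e^2*ei*eta*beta^2*c*k + (2)*j*e^2*ei*eta*beta^2*c^2 + (1)*j*e^2*ei*eta*beta^3*c*k + (1)*j*e^2*ei*eta^3*beta*c^3*k + (-4)*j*co*e*ei*eta*beta*c^2) * hsc + ((1/2)*ei*k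 + (-1)*ei*beta*k + (-1)*ei*beta*c + (2)*ei*beta^2*c + (1)*ei*beta^3*k + (-1)*ei*beta^3*c + (-1/2)*ei*beta^4*k + (1)*ei*eta^2*c^2*k + (-1)*ei*eta^2*beta*c^2*k + (1)*ei*eta^2*beta*c^3 + (1/2)*ei*eta^4*c^4*k + (-1/2)*e*k + (-1)*e*beta*k + (1)*e*beta*c + (2)*e*beta^2*c + (1)*e*beta^3*k + (1)*e*beta^3*c + (1/2)*e*beta^4*k + (-1)*e*eta^2*c^2*k + (-1)*e*eta^2*beta*c^2*k + (-1)*e*eta^2*beta*c^3 + (-1/2)*e*eta^4*c^4*k + (-1)*co^2*ei*k + (2)*co^2*ei*beta*k + (2)*co^2*ei*beta*c + (-4)*co^2*ei*beta^2*c + (-2)*co^2*ei*beta^3*k + (2)*co^2*ei*beta^3*c + (1)*co^2*ei*beta^4*k + (-2)*co^2*ei*eta^2*c^2*k + (2)*co^2*ei*eta^2*beta*c^2*k + (-2)*co^2*ei*eta^2*beta*c^3 + (-1)*co^2*ei*eta^4*c^4*k + (1)*co^2*e*k + (2)*co^2*e*beta*k + (-2)*co^2*e*beta*c + (-4)*co^2*e*beta^2*c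 + (-2)*co^2*e*beta^3*k + (-2)*co^2*e*beta^3*c + (-1)*co^2*e*beta^4*k + (2)*co^2*e*eta^2*c^2*k + (2)*co^2*e*eta^2*beta*c^2*k + (2)*co^2*e*eta^2*beta*c^3 + (1)*co^2*e*eta^4*c^4*k + (4)*s*eta*beta*c^2 + (-2)*s*co*ei*eta*beta*c*k + (4)*s*co*ei*eta*beta*c^2 + (4)*s*co*ei*eta*beta^2*c*k + (-4)*s*co*ei*eta*beta^2*c^2 + (-2)*s*co*ei*eta*beta^3*c*k + (-2)*s*co*ei*eta^3*beta*c^3*k + (2)*s*co*e*eta*beta*c*k + (4)*s*co*e*eta*beta*c^2 + (4)*s*co*e*eta*beta^2*c*k + (4)*s*co*e*eta*beta^2*c^2 + (2)*s*co*e*eta*beta^3*c*k + (2)*s*co*e*eta^3*beta*c^3*k + (-1)*j*ei*eta*beta*c*k + (2)*j*ei*eta*beta*c^2 + (2)*j*ei*eta*beta^2*c*k + (-2)*j*ei*eta*beta^2*c^2 + (-1)*j*ei*eta*beta^3*c*k + (-1)*j*ei*eta^3*beta*c^3*k + (1)*j*e*eta*beta*c*k + (2)*j*e*eta*beta*c^2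 + (2)*j*e*eta*beta^2*c*k + (2)*j*e*eta*beta^2*c^2 + (1)*j*e*eta*beta^3*c*k + (1)*j*e*eta^3*beta*c^3*k + (-4)*j*co*eta*beta*c^2 + (2)*j*co^2*ei*eta*beta*c*k + (-4)*j*co^2*ei*eta*beta*c^2 + (-4)*j*co^2*ei*eta*beta^2*c*k + (4)*j*co^2*ei*eta*beta^2*c^2 + (2)*j*co^2*ei*eta*beta^3*c*k + (2)*j*co^2*ei*eta^3*beta*c^3*k + (-2)*j*co^2*e*eta*beta*c*k + (-4)*j*co^2*e*eta*beta*c^2 + (-4)*j*co^2*e*eta*beta^2*c*k + (-4)*j*co^2*e*eta*beta^2*c^2 + (-2)*j*co^2*e*eta*beta^3*c*k + (-2)*j*co^2*e*eta^3*beta*c^3*k + (-1)*j*s*co*ei*k + (2)*j*s*co*ei*beta*k + (2)*j*s*co*ei*beta*c + (-4)*j*s*co*ei*beta^2*c + (-2)*j*s*co*ei*beta^3*k + (2)*j*s*co*ei*beta^3*c + (1)*j*s*co*ei*beta^4*k + (-2)*j*s*co*ei*eta^2*c^2*k + (2)*j*s*co*ei*eta^2*beta*c^2*k + (-2)*j*s*co*ei*eta^2*beta*c^3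 + (-1)*j*s*co*ei*eta^4*c^4*k + (1)*j*s*co*e*k + (2)*j*s*co*e*beta*k + (-2)*j*s*co*e*beta*c + (-4)*j*s*co*e*beta^2*c + (-2)*j*s*co*e*beta^3*k + (-2)*j*s*co*e*beta^3*c + (-1)*j*s*co*e*beta^4*k + (2)*j*s*co*e*eta^2*c^2*k + (2)*j*s*co*e*eta^2*beta*c^2*k + (2)*j*s*co*e*eta^2*beta*c^3 + (1)*j*s*co*e*eta^4*c^4*k) * he

/-- the Hirota form `i ∂_x log(f'/f)` of the single-breather tau
functions equals the explicit breather formula `N/D`: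
`i(∂_x f' · f − f' · ∂_x f)·D = N·f'·f` at every real `(x,t)`. -/
theorem breather_explicit_formula (k φ ξ0 η0 c0 c β : ℝ) (hk : 0 < k) (hφ : 0 < φ)
    (hc0 : c0 = k * Real.cosh φ / Real.sinh φ)
    (hc : 0 < c) (hcon : (c - c0) ^ 2 > k ^ 2)
    (hβ : β = 2 * c * k / ((c - c0) ^ 2 - k ^ 2))
    (f f' : ℝ → ℝ → ℂ) (Nf Df : ℝ → ℝ → ℝ)
    (hf : ∀ x t : ℝ, f x t =
      β * (1 - Complex.exp (Complex.I * (k * (x - c0 * t - ξ0)) + φ))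
        - (1 + Complex.I * (c * (x - c * t - η0)))
            * (1 + Complex.exp (Complex.I * (k * (x - c0 * t - ξ0)) + φ)))
    (hf' : ∀ x t : ℝ, f' x t =
      β * (1 - Complex.exp (Complex.I * (k * (x - c0 * t - ξ0)) - φ))
        + (1 - Complex.I * (c * (x - c * t - η0)))
            * (1 + Complex.exp (Complex.I * (k * (x - c0 * t - ξ0)) - φ)))
    (hN : ∀ x t : ℝ, Nf x t =
      2 * (c + k * β) * Real.cosh φ
        + (k * (1 + β ^ 2 + c ^ 2 * (x - c * t - η0) ^ 2) + 2 * β * c) * Real.sinh φ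
        + 2 * c * Real.cos (k * (x - c0 * t - ξ0)))
    (hD : ∀ x t : ℝ, Df x t =
      (1 + β ^ 2 + c ^ 2 * (x - c * t - η0) ^ 2) * Real.cosh φ
        + 2 * β * Real.sinh φ
        + (1 - β ^ 2 + c ^ 2 * (x - c * t - η0) ^ 2) * Real.cos (k * (x - c0 * t - ξ0))
        + 2 * β * c * (x - c * t - η0) * Real.sin (k * (x - c0 * t - ξ0))) :
    ∀ x t : ℝ,
      Complex.I * (deriv (fun y => f' y t) x * f x t - f' x t * deriv (fun y => f y t) x)
          * (Df x t : ℂ)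
        = (Nf x t : ℂ) * f' x t * f x t := by
  intro x t
  have hfun : (fun y : ℝ => f y t) = fun y : ℝ =>
      (β : ℂ) * (1 - Complex.exp (Complex.I * (k * ((y : ℂ) - c0 * t - ξ0)) + φ))
        - (1 + Complex.I * (c * ((y : ℂ) - c * t - η0)))
            * (1 + Complex.exp (Complex.I * (k * ((y : ℂ) - c0 * t - ξ0)) + φ)) :=
    funext fun y => hf y t
  have hfun' : (fun y : ℝ => f' y t) = fun y : ℝ =>
      (β : ℂ) * (1 - Complex.exp (Complex.I * (k * ((y : ℂ) - c0 * t - ξ0)) - φ))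
        + (1 - Complex.I * (c * ((y : ℂ) - c * t - η0)))
            * (1 + Complex.exp (Complex.I * (k * ((y : ℂ) - c0 * t - ξ0)) - φ)) :=
    funext fun y => hf' y t
  set E : ℂ := Complex.exp (Complex.I * (k * ((x : ℂ) - c0 * t - ξ0)) + φ) with hE
  set E' : ℂ := Complex.exp (Complex.I * (k * ((x : ℂ) - c0 * t - ξ0)) - φ) with hE'
  have dlin : HasDerivAt (fun z : ℂ => Complex.I * ((k : ℂ) * (z - c0 * t - ξ0)))
      (Complex.I * ((k : ℂ) * 1)) (x : ℂ) :=
    ((((hasDerivAt_id (x : ℂ)).sub_const _).sub_const _).const_mul (k : ℂ)).const_mul Complex.I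
  have dE : HasDerivAt (fun z : ℂ => Complex.exp (Complex.I * (k * (z - c0 * t - ξ0)) + φ))
      (E * (Complex.I * ((k : ℂ) * 1))) (x : ℂ) := (dlin.add_const _).cexp
  have dE' : HasDerivAt (fun z : ℂ => Complex.exp (Complex.I * (k * (z - c0 * t - ξ0)) - φ))
      (E' * (Complex.I * ((k : ℂ) * 1))) (x : ℂ) := (dlin.sub_const _).cexp
  have dlc : HasDerivAt (fun z : ℂ => Complex.I * ((c : ℂ) * (z - c * t - η0)))
      (Complex.I * ((c : ℂ) * 1)) (x : ℂ) :=
    ((((hasDerivAt_id (x : ℂ)).sub_const _).sub_const _).const_mul (c : ℂ)).const_mul Complex.I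
  have dF : HasDerivAt (fun z : ℂ =>
      (β : ℂ) * (1 - Complex.exp (Complex.I * (k * (z - c0 * t - ξ0)) + φ))
        - (1 + Complex.I * (c * (z - c * t - η0)))
            * (1 + Complex.exp (Complex.I * (k * (z - c0 * t - ξ0)) + φ)))
      ((β : ℂ) * -(E * (Complex.I * ((k : ℂ) * 1)))
        - (Complex.I * ((c : ℂ) * 1) * (1 + E)
            + (1 + Complex.I * ((c : ℂ) * ((x : ℂ) - c * t - η0)))
                * (E * (Complex.I * ((k : ℂ) * 1))))) (x : ℂ) :=
    ((dE.const_sub 1).const_mul _).sub ((dlc.const_add 1).mul (dE.const_add 1))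
  have dF' : HasDerivAt (fun z : ℂ =>
      (β : ℂ) * (1 - Complex.exp (Complex.I * (k * (z - c0 * t - ξ0)) - φ))
        + (1 - Complex.I * (c * (z - c * t - η0)))
            * (1 + Complex.exp (Complex.I * (k * (z - c0 * t - ξ0)) - φ)))
      ((β : ℂ) * -(E' * (Complex.I * ((k : ℂ) * 1)))
        + (-(Complex.I * ((c : ℂ) * 1)) * (1 + E')
            + (1 - Complex.I * ((c : ℂ) * ((x : ℂ) - c * t - η0)))
                * (E' * (Complex.I * ((k : ℂ) * 1))))) (x : ℂ) :=
    ((dE'.const_sub 1).const_mul _).add ((dlc.const_sub 1).mul (dE'.const_add 1))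
  have hdf : deriv (fun y : ℝ => f y t) x
      = ((β : ℂ) * -(E * (Complex.I * ((k : ℂ) * 1)))
        - (Complex.I * ((c : ℂ) * 1) * (1 + E)
            + (1 + Complex.I * ((c : ℂ) * ((x : ℂ) - c * t - η0)))
                * (E * (Complex.I * ((k : ℂ) * 1))))) := by
    rw [hfun]; exact dF.comp_ofReal.deriv
  have hdf' : deriv (fun y : ℝ => f' y t) x
      = ((β : ℂ) * -(E' * (Complex.I * ((k : ℂ) * 1)))
        + (-(Complex.I * ((c : ℂ) * 1)) * (1 + E')
            + (1 - Complex.I * ((c : ℂ) * ((x : ℂ) - c * t - η0)))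
                * (E' * (Complex.I * ((k : ℂ) * 1))))) := by
    rw [hfun']; exact dF'.comp_ofReal.deriv
  have hexp1 : E = (Complex.cos ((k : ℂ) * ((x : ℂ) - c0 * t - ξ0))
      + Complex.sin ((k : ℂ) * ((x : ℂ) - c0 * t - ξ0)) * Complex.I) * Complex.exp (φ : ℂ) := by
    rw [hE, Complex.exp_add, mul_comm Complex.I, Complex.exp_mul_I]
  have hexp2 : E' = (Complex.cos ((k : ℂ) * ((x : ℂ) - c0 * t - ξ0))
      + Complex.sin ((k : ℂ) * ((x : ℂ) - c0 * t - ξ0)) * Complex.I) * Complex.exp (-(φ : ℂ)) := by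
    rw [hE', sub_eq_add_neg, Complex.exp_add, mul_comm Complex.I, Complex.exp_mul_I]
  have he : Complex.exp (φ : ℂ) * Complex.exp (-(φ : ℂ)) = 1 := by
    rw [← Complex.exp_add]; simp
  have hch : Complex.cosh (φ : ℂ) = (Complex.exp (φ : ℂ) + Complex.exp (-(φ : ℂ))) / 2 := rfl
  have hsh : Complex.sinh (φ : ℂ) = (Complex.exp (φ : ℂ) - Complex.exp (-(φ : ℂ))) / 2 := rfl
  have hNc : ((2 * (c + k * β) * Real.cosh φ
        + (k * (1 + β ^ 2 + c ^ 2 * (x - c * t - η0) ^ 2) + 2 * β * c) * Real.sinh φ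
        + 2 * c * Real.cos (k * (x - c0 * t - ξ0)) : ℝ) : ℂ)
      = 2 * ((c : ℂ) + k * β) * Complex.cosh (φ : ℂ)
        + ((k : ℂ) * (1 + (β : ℂ) ^ 2 + (c : ℂ) ^ 2 * ((x : ℂ) - c * t - η0) ^ 2)
            + 2 * β * c) * Complex.sinh (φ : ℂ)
        + 2 * (c : ℂ) * Complex.cos ((k : ℂ) * ((x : ℂ) - c0 * t - ξ0)) := by
    push_cast; ring
  have hDc : (((1 + β ^ 2 + c ^ 2 * (x - c * t - η0) ^ 2) * Real.cosh φ
        + 2 * β * Real.sinh φ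
        + (1 - β ^ 2 + c ^ 2 * (x - c * t - η0) ^ 2) * Real.cos (k * (x - c0 * t - ξ0))
        + 2 * β * c * (x - c * t - η0) * Real.sin (k * (x - c0 * t - ξ0)) : ℝ) : ℂ)
      = (1 + (β : ℂ) ^ 2 + (c : ℂ) ^ 2 * ((x : ℂ) - c * t - η0) ^ 2) * Complex.cosh (φ : ℂ)
        + 2 * (β : ℂ) * Complex.sinh (φ : ℂ)
        + (1 - (β : ℂ) ^ 2 + (c : ℂ) ^ 2 * ((x : ℂ) - c * t - η0) ^ 2)
            * Complex.cos ((k : ℂ) * ((x : ℂ) - c0 * t - ξ0))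
        + 2 * (β : ℂ) * c * ((x : ℂ) - c * t - η0)
            * Complex.sin ((k : ℂ) * ((x : ℂ) - c0 * t - ξ0)) := by
    push_cast; ring
  rw [hf x t, hf' x t, hN x t, hD x t, hdf, hdf', hNc, hDc, ← hE, ← hE', hexp1, hexp2]
  have hsc : Complex.sin ((k : ℂ) * ((x : ℂ) - c0 * t - ξ0)) ^ 2
      + Complex.cos ((k : ℂ) * ((x : ℂ) - c0 * t - ξ0)) ^ 2 = 1 :=
    Complex.sin_sq_add_cos_sq _
  generalize hS : Complex.sin ((k : ℂ) * ((x : ℂ) - c0 * t - ξ0)) = S at hsc ⊢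
  generalize hCO : Complex.cos ((k : ℂ) * ((x : ℂ) - c0 * t - ξ0)) = CO at hsc ⊢
  generalize hE1 : Complex.exp (φ : ℂ) = EE at he hch hsh ⊢
  generalize hE2 : Complex.exp (-(φ : ℂ)) = EI at he hch hsh ⊢
  generalize hCH : Complex.cosh (φ : ℂ) = CH at hch ⊢
  generalize hSH : Complex.sinh (φ : ℂ) = SH at hsh ⊢
  linear_combination breather_key Complex.I S CO EE EI
    ((x : ℂ) - c * t - η0) (β : ℂ) (c : ℂ) (k : ℂ) CH SH
    Complex.I_sq hsc he hch hsh
end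

section
/- Let k > 0, φ > 0, set c0 = k·coth(φ), and let c > 0 satisfy (c − c0)² > k². Set β = 2ck/((c − c0)² − k²), and fix t, ξ0, η0 ∈ ℝ. Define the entire function F(z) = β(1 − e^{i k (z − c0 t − ξ0) + φ}) − (1 + i c (z − c t − η0))(1 + e^{i k (z − c0 t − ξ0) + φ}) of the complex variable z. Then F(z) ≠ 0 for every z ∈ ℂ with Im(z) ≤ 0; i.e., all zeros of the breather tau function f lie strictly in the upper half-plane. -/
/-! The exponential `E = exp (i k (z - c₀t - ξ₀) + φ)` has modulus `exp (φ - k Im z) > 1` on the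
closed lower half-plane, so the Cayley transform `(1 - E) / (1 + E)` has negative real part there.
A zero of `F` would give `1 + i c (z - c t - η₀) = β (1 - E) / (1 + E)`; the left side has real part
`1 - c Im z ≥ 1`, while `β > 0` makes the right side's real part negative. -/

open Complex

theorem Complex.one_lt_norm_exp_I_mul_add {k φ : ℝ} {w : ℂ} (hk : 0 ≤ k) (hφ : 0 < φ)
    (hw : w.im ≤ 0) : 1 < ‖exp (I * (k * w) + φ)‖ := by
  rw [norm_exp, Real.one_lt_exp_iff]
  simp only [add_re, mul_re, I_re, I_im, ofReal_re, ofReal_im, mul_im]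
  nlinarith

theorem one_add_ne_zero_of_one_lt_norm {R : Type*} [SeminormedRing R] [NormOneClass R] {w : R}
    (hw : 1 < ‖w‖) : 1 + w ≠ 0 := fun h => by
  rw [← neg_eq_of_add_eq_zero_right h, norm_neg, norm_one] at hw
  exact hw.false

theorem Complex.re_one_sub_div_one_add_neg {w : ℂ} (hw : 1 < ‖w‖) :
    ((1 - w) / (1 + w)).re < 0 := by
  have hnormSq : 1 < w.re ^ 2 + w.im ^ 2 := by
    rw [← one_lt_sq_iff₀ (norm_nonneg w), Complex.sq_norm, normSq_apply] at hw
    nlinarith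
  rw [div_re, ← add_div]
  apply div_neg_of_neg_of_pos _ (normSq_pos.mpr (one_add_ne_zero_of_one_lt_norm hw))
  simp only [sub_re, sub_im, add_re, add_im, one_re, one_im]
  nlinarith

theorem breather_tau_zero_free_lower_half_plane_general
    (k φ ξ0 η0 c0 c β t : ℝ) (hk : 0 < k) (hφ : 0 < φ)
    (hc : 0 < c) (hcon : (c - c0) ^ 2 > k ^ 2)
    (hβ : β = 2 * c * k / ((c - c0) ^ 2 - k ^ 2))
    (F : ℂ → ℂ)
    (hF : ∀ z : ℂ, F z =
      β * (1 - Complex.exp (Complex.I * (k * (z - c0 * t - ξ0)) + φ))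
        - (1 + Complex.I * (c * (z - c * t - η0)))
            * (1 + Complex.exp (Complex.I * (k * (z - c0 * t - ξ0)) + φ))) :
    ∀ z : ℂ, z.im ≤ 0 → F z ≠ 0 := by
  intro z hz hFz
  set E := exp (I * (k * (z - c0 * t - ξ0)) + φ)
  have hE : 1 < ‖E‖ := one_lt_norm_exp_I_mul_add hk.le hφ (by simpa using hz)
  have hβ0 : 0 < β := hβ ▸ div_pos (by positivity) (sub_pos.mpr hcon)
  have hsolve : 1 + I * (c * (z - c * t - η0)) = β * ((1 - E) / (1 + E)) := by
    have hne := one_add_ne_zero_of_one_lt_norm hE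
    rw [hF] at hFz
    field_simp
    linear_combination -hFz
  have hre := congrArg re hsolve
  simp only [add_re, one_re, mul_re, I_re, I_im, ofReal_re, ofReal_im, mul_im,
    sub_re, sub_im] at hre
  nlinarith [mul_neg_of_pos_of_neg hβ0 (re_one_sub_div_one_add_neg hE)]

/-- all zeros of the breather tau function lie strictly in the
upper half plane: its analytic continuation `F` in `x`, at fixed time `t`,
does not vanish on the closed lower half-plane. -/
theorem breather_tau_zero_free_lower_half_plane
    (k φ ξ0 η0 c0 c β t : ℝ) (hk : 0 < k) (hφ : 0 < φ)
    (hc0 : c0 = k * Real.cosh φ / Real.sinh φ)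
    (hc : 0 < c) (hcon : (c - c0) ^ 2 > k ^ 2)
    (hβ : β = 2 * c * k / ((c - c0) ^ 2 - k ^ 2))
    (F : ℂ → ℂ)
    (hF : ∀ z : ℂ, F z =
      β * (1 - Complex.exp (Complex.I * (k * (z - c0 * t - ξ0)) + φ))
        - (1 + Complex.I * (c * (z - c * t - η0)))
            * (1 + Complex.exp (Complex.I * (k * (z - c0 * t - ξ0)) + φ))) :
    ∀ z : ℂ, z.im ≤ 0 → F z ≠ 0 :=
  breather_tau_zero_free_lower_half_plane_general k φ ξ0 η0 c0 c β t hk hφ hc hcon hβ F hF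
end

section
/- Let k > 0, φ > 0, set c0 = k·coth(φ), let c > 0 satisfy (c − c0)² > k², and set β = 2ck/((c − c0)² − k²). Then for all real ξ and η, the denominator of the breather solution is strictly positive: (1 + β² + c²η²)cosh(φ) + 2β·sinh(φ) + (1 − β² + c²η²)cos(kξ) + 2βcη·sin(kξ) > 0. Consequently the breather solution û is bounded on ℝ × ℝ. -/
/-- the denominator of the single-breather solution of the
Benjamin–Ono equation is strictly positive for all real `ξ` and `η`. -/
theorem breather_denominator_positive (k φ c0 c β : ℝ) (hk : 0 < k) (hφ : 0 < φ)
    (hc0 : c0 = k * Real.cosh φ / Real.sinh φ)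
    (hc : 0 < c) (hcon : (c - c0) ^ 2 > k ^ 2)
    (hβ : β = 2 * c * k / ((c - c0) ^ 2 - k ^ 2)) :
    ∀ ξ η : ℝ,
      0 < (1 + β ^ 2 + c ^ 2 * η ^ 2) * Real.cosh φ + 2 * β * Real.sinh φ
        + (1 - β ^ 2 + c ^ 2 * η ^ 2) * Real.cos (k * ξ)
        + 2 * β * c * η * Real.sin (k * ξ) := by
  intro ξ η
  have hβ0 : 0 < β := by
    rw [hβ]
    exact div_pos (by positivity) (by linarith)
  have hsinh : 0 < Real.sinh φ := Real.sinh_pos_iff.mpr hφ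
  set θ := k * ξ with hθ
  set s := c * η with hs
  have hP : 0 < Real.cosh φ - Real.cos θ := by
    have h1 : Real.cos θ ≤ 1 := Real.cos_le_one θ
    have h2 : 1 < Real.cosh φ := by
      rw [Real.one_lt_cosh]; exact ne_of_gt hφ
    linarith
  set D := (1 + β ^ 2 + c ^ 2 * η ^ 2) * Real.cosh φ + 2 * β * Real.sinh φ
        + (1 - β ^ 2 + c ^ 2 * η ^ 2) * Real.cos θ
        + 2 * β * c * η * Real.sin θ with hD
  set A := β * (Real.cosh φ - Real.cos θ) + Real.sinh φ + s * Real.sin θ with hA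
  set B := Real.sin θ - s * Real.sinh φ with hB
  have key : (Real.cosh φ - Real.cos θ) * D = A ^ 2 + B ^ 2 := by
    have h1 : Real.cosh φ ^ 2 = Real.sinh φ ^ 2 + 1 := Real.cosh_sq φ
    have h2 : Real.sin θ ^ 2 + Real.cos θ ^ 2 = 1 := Real.sin_sq_add_cos_sq θ
    rw [hD, hA, hB, hs]
    linear_combination (1 + (c * η) ^ 2) * h1 - (1 + (c * η) ^ 2) * h2
  have hpos : 0 < A ^ 2 + B ^ 2 := by
    rcases eq_or_ne B 0 with h0 | h0
    · have hsin : Real.sin θ = s * Real.sinh φ := by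
        have := h0; rw [hB] at this; linarith
      have hApos : 0 < A := by
        rw [hA, hsin]
        have e : s * (s * Real.sinh φ) = s ^ 2 * Real.sinh φ := by ring
        rw [e]
        have h3 : 0 ≤ s ^ 2 * Real.sinh φ := mul_nonneg (sq_nonneg s) hsinh.le
        nlinarith [mul_pos hβ0 hP]
      positivity
    · have : 0 < B ^ 2 := by positivity
      nlinarith [sq_nonneg A]
  have hPD : 0 < (Real.cosh φ - Real.cos θ) * D := key ▸ hpos
  nlinarith [hPD, hP]
end

section
/- Let k > 0, φ > 0, set c0 = k·coth(φ), let c > 0 satisfy (c − c0)² > k², and set β = 2ck/((c − c0)² − k²). For real variables ξ and η define Û(ξ,η) = [2(c + kβ)cosh(φ) + (k(1 + β² + c²η²) + 2βc)sinh(φ) + 2c·cos(kξ)] / [(1 + β² + c²η²)cosh(φ) + 2β·sinh(φ) + (1 − β² + c²η²)cos(kξ) + 2βcη·sin(kξ)]. Then for every fixed real ξ, Û(ξ,η) → k·sinh(φ)/(cos(kξ) + cosh(φ)) as η → +∞ and as η → −∞; i.e., the breather converges to the traveling periodic wave with no phase shift. -/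
open Filter Topology Bornology

/-- Substituting `t = x⁻¹` turns the quotient into a rational function of `t` that is continuous
at `t = 0`, where it takes the value `a₂ / b₂`. -/
theorem tendsto_quadratic_div_quadratic_cobounded {𝕜 : Type*} [NormedField 𝕜]
    (a₀ a₁ a₂ b₀ b₁ b₂ : 𝕜) (hb₂ : b₂ ≠ 0) :
    Tendsto (fun x => (a₀ + a₁ * x + a₂ * x ^ 2) / (b₀ + b₁ * x + b₂ * x ^ 2))
      (cobounded 𝕜) (𝓝 (a₂ / b₂)) := by
  set g : 𝕜 → 𝕜 := fun t => (a₀ * t ^ 2 + a₁ * t + a₂) / (b₀ * t ^ 2 + b₁ * t + b₂)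
  have hg : ContinuousAt g 0 := by
    apply ContinuousAt.div <;> first | fun_prop | simpa using hb₂
  have hg₀ : g 0 = a₂ / b₂ := by simp [g]
  refine (hg₀ ▸ hg.tendsto.comp tendsto_inv₀_cobounded).congr' ?_
  filter_upwards [eventually_ne_cobounded 0] with x hx
  simp only [g, Function.comp_apply]
  field_simp

theorem Real.cos_add_cosh_pos (x : ℝ) {φ : ℝ} (hφ : φ ≠ 0) : 0 < Real.cos x + Real.cosh φ := by
  linarith [Real.neg_one_le_cos x, Real.one_lt_cosh.2 hφ]

theorem breather_asymptotics_general (k φ c β : ℝ) (hφ : 0 < φ)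
    (hc : 0 < c)
    (U : ℝ → ℝ → ℝ)
    (hU : ∀ ξ η : ℝ, U ξ η =
      (2 * (c + k * β) * Real.cosh φ
          + (k * (1 + β ^ 2 + c ^ 2 * η ^ 2) + 2 * β * c) * Real.sinh φ
          + 2 * c * Real.cos (k * ξ))
        / ((1 + β ^ 2 + c ^ 2 * η ^ 2) * Real.cosh φ + 2 * β * Real.sinh φ
          + (1 - β ^ 2 + c ^ 2 * η ^ 2) * Real.cos (k * ξ)
          + 2 * β * c * η * Real.sin (k * ξ))) :
    ∀ ξ : ℝ,
      Filter.Tendsto (fun η => U ξ η) Filter.atTop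
        (nhds (k * Real.sinh φ / (Real.cos (k * ξ) + Real.cosh φ))) ∧
      Filter.Tendsto (fun η => U ξ η) Filter.atBot
        (nhds (k * Real.sinh φ / (Real.cos (k * ξ) + Real.cosh φ))) := by
  intro ξ
  set a₀ := 2 * (c + k * β) * Real.cosh φ + (k * (1 + β ^ 2) + 2 * β * c) * Real.sinh φ
    + 2 * c * Real.cos (k * ξ)
  set b₀ := (1 + β ^ 2) * Real.cosh φ + 2 * β * Real.sinh φ + (1 - β ^ 2) * Real.cos (k * ξ)
  have hU_quadratic : (fun η => U ξ η) = fun η =>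
      (a₀ + 0 * η + c ^ 2 * (k * Real.sinh φ) * η ^ 2) /
        (b₀ + 2 * β * c * Real.sin (k * ξ) * η
          + c ^ 2 * (Real.cos (k * ξ) + Real.cosh φ) * η ^ 2) := by
    funext η
    rw [hU]
    congr 1 <;> ring
  have hc₂ : c ^ 2 ≠ 0 := by positivity
  have hwave := (Real.cos_add_cosh_pos (k * ξ) hφ.ne').ne'
  have hlim := tendsto_quadratic_div_quadratic_cobounded a₀ 0 (c ^ 2 * (k * Real.sinh φ))
    b₀ (2 * β * c * Real.sin (k * ξ)) _ (mul_ne_zero hc₂ hwave)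
  rw [mul_div_mul_left _ _ hc₂, ← hU_quadratic] at hlim
  exact ⟨hlim.mono_left IsOrderBornology.atTop_le_cobounded,
    hlim.mono_left IsOrderBornology.atBot_le_cobounded⟩

/-- in the traveling coordinates `(ξ, η)`, the single-breather
solution of the Benjamin–Ono equation converges, as `η → ±∞` for each fixed
`ξ`, to the traveling periodic wave `k·sinh φ/(cos(kξ) + cosh φ)` (no phase
shift). -/
theorem breather_asymptotics (k φ c0 c β : ℝ) (hk : 0 < k) (hφ : 0 < φ)
    (hc0 : c0 = k * Real.cosh φ / Real.sinh φ)
    (hc : 0 < c) (hcon : (c - c0) ^ 2 > k ^ 2)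
    (hβ : β = 2 * c * k / ((c - c0) ^ 2 - k ^ 2))
    (U : ℝ → ℝ → ℝ)
    (hU : ∀ ξ η : ℝ, U ξ η =
      (2 * (c + k * β) * Real.cosh φ
          + (k * (1 + β ^ 2 + c ^ 2 * η ^ 2) + 2 * β * c) * Real.sinh φ
          + 2 * c * Real.cos (k * ξ))
        / ((1 + β ^ 2 + c ^ 2 * η ^ 2) * Real.cosh φ + 2 * β * Real.sinh φ
          + (1 - β ^ 2 + c ^ 2 * η ^ 2) * Real.cos (k * ξ)
          + 2 * β * c * η * Real.sin (k * ξ))) :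
    ∀ ξ : ℝ,
      Filter.Tendsto (fun η => U ξ η) Filter.atTop
        (nhds (k * Real.sinh φ / (Real.cos (k * ξ) + Real.cosh φ))) ∧
      Filter.Tendsto (fun η => U ξ η) Filter.atBot
        (nhds (k * Real.sinh φ / (Real.cos (k * ξ) + Real.cosh φ))) :=
  breather_asymptotics_general k φ c β hφ hc U hU
end

section
/- Let k > 0 and φ > 0, set c0 = k·coth(φ), and let u(ξ) = k·sinh(φ)/(cos(kξ) + cosh(φ)). For λ ∈ ℝ define m⁺(ξ) = [(2λ + c0 − k) + (2λ + c0 + k)e^{i k ξ − φ}]/(1 + e^{i k ξ − φ}) and m⁻(ξ) = [(2λ + c0 − k) + (2λ + c0 + k)e^{i k ξ + φ}]/(1 + e^{i k ξ + φ}). Then the denominators are nonzero for all real ξ and the pair (m⁺, m⁻) satisfies the stationary first Lax equation i (m⁺)'(ξ) + λ(m⁺(ξ) − m⁻(ξ)) + u(ξ)·m⁺(ξ) = 0 for every real ξ and every λ ∈ ℝ. -/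
/-!
Put `z = i k ξ`, `w = e^(z - φ)` and `v = e^(z + φ)`. Since `v - w = 2 e^z sinh φ`,
`v + w = 2 e^z cosh φ` and `(1 + v)(1 + w) = 2 e^z (cos kξ + cosh φ)`, the wave and the speed are
rational in `w, v`: `u = k (v/(1+v) - w/(1+w))` and `c0 = k (v + w)/(v - w)`. The eigenfunctions
`m⁺, m⁻` are the same Möbius function of `w` and of `v`, and `w' = i k w`, so the Lax equation
becomes a rational identity in `k, λ, w, v`.
-/

open Complex

namespace Complex

theorem one_add_exp_ne_zero {z : ℂ} (hz : z.re ≠ 0) : 1 + exp z ≠ 0 := by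
  intro h
  have hnorm : ‖exp z‖ = 1 := by rw [eq_neg_of_add_eq_zero_right h, norm_neg, norm_one]
  rw [norm_exp, Real.exp_eq_one_iff] at hnorm
  exact hz hnorm

theorem exp_add_add_exp_sub (z w : ℂ) : exp (z + w) + exp (z - w) = 2 * exp z * cosh w := by
  rw [mul_right_comm, two_cosh, exp_add, exp_sub, exp_neg]
  ring

theorem exp_add_sub_exp_sub (z w : ℂ) : exp (z + w) - exp (z - w) = 2 * exp z * sinh w := by
  rw [mul_right_comm, two_sinh, exp_add, exp_sub, exp_neg]
  ring

theorem cosh_div_sinh_eq (z w : ℂ) :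
    cosh w / sinh w = (exp (z + w) + exp (z - w)) / (exp (z + w) - exp (z - w)) := by
  rw [exp_add_add_exp_sub, exp_add_sub_exp_sub,
    mul_div_mul_left _ _ (mul_ne_zero two_ne_zero (exp_ne_zero z))]

theorem one_add_exp_add_mul_one_add_exp_sub (z w : ℂ) :
    (1 + exp (z + w)) * (1 + exp (z - w)) = 2 * exp z * (cosh z + cosh w) := by
  have hprod : exp (z + w) * exp (z - w) = exp z * exp z := by
    rw [← exp_add, ← exp_add]; ring_nf
  have hinv : exp z * exp (-z) = 1 := by rw [← exp_add, add_neg_cancel, exp_zero]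
  linear_combination hprod + exp_add_add_exp_sub z w - exp z * two_cosh z - hinv

theorem exp_div_one_add_exp_sub_exp_div_one_add_exp (z w : ℂ)
    (hplus : 1 + exp (z + w) ≠ 0) (hminus : 1 + exp (z - w) ≠ 0) :
    exp (z + w) / (1 + exp (z + w)) - exp (z - w) / (1 + exp (z - w))
      = sinh w / (cosh z + cosh w) := by
  have hprod := one_add_exp_add_mul_one_add_exp_sub z w
  have hnum : exp (z + w) * (1 + exp (z - w)) - (1 + exp (z + w)) * exp (z - w)
      = 2 * exp z * sinh w := by
    linear_combination exp_add_sub_exp_sub z w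
  rw [div_sub_div _ _ hplus hminus, hprod, hnum,
    mul_div_mul_left _ _ (mul_ne_zero two_ne_zero (exp_ne_zero z))]

end Complex

theorem HasDerivAt.div_one_add_cexp {𝕜 : Type*} [NontriviallyNormedField 𝕜] [NormedAlgebra 𝕜 ℂ]
    {f : 𝕜 → ℂ} {f' : ℂ} {x : 𝕜} (A B : ℂ) (hf : HasDerivAt f f' x)
    (h : 1 + Complex.exp (f x) ≠ 0) :
    HasDerivAt (fun t => (A + B * Complex.exp (f t)) / (1 + Complex.exp (f t)))
      ((B - A) * (Complex.exp (f x) * f') / (1 + Complex.exp (f x)) ^ 2) x := by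
  refine (((hf.cexp.const_mul B).const_add A).fun_div (hf.cexp.const_add 1) h).congr_deriv ?_
  ring

theorem lax_equation_algebraic (k lam c0 w v : ℂ) (hw : 1 + w ≠ 0) (hv : 1 + v ≠ 0)
    (hvw : v - w ≠ 0) (hc0 : c0 = k * (v + w) / (v - w)) :
    I * ((2 * lam + c0 + k - (2 * lam + c0 - k)) * (w * (I * k)) / (1 + w) ^ 2)
      + lam * ((2 * lam + c0 - k + (2 * lam + c0 + k) * w) / (1 + w)
        - (2 * lam + c0 - k + (2 * lam + c0 + k) * v) / (1 + v))
      + k * (v / (1 + v) - w / (1 + w)) * ((2 * lam + c0 - k + (2 * lam + c0 + k) * w) / (1 + w))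
      = 0 := by
  subst hc0
  field_simp
  linear_combination (2 * k ^ 2 * w * (v - w) * (1 + v)) * I_sq

theorem stationary_lax_equation_general (k φ c0 : ℝ) (hφ : 0 < φ)
    (hc0 : c0 = k * Real.cosh φ / Real.sinh φ)
    (u : ℝ → ℝ)
    (hu : ∀ ξ : ℝ, u ξ = k * Real.sinh φ / (Real.cos (k * ξ) + Real.cosh φ)) :
    ∀ lam : ℝ, ∀ mp mm : ℝ → ℂ,
      (∀ ξ : ℝ, mp ξ =
        ((2 * lam + c0 - k) + (2 * lam + c0 + k) * Complex.exp (Complex.I * (k * ξ) - φ))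
          / (1 + Complex.exp (Complex.I * (k * ξ) - φ))) →
      (∀ ξ : ℝ, mm ξ =
        ((2 * lam + c0 - k) + (2 * lam + c0 + k) * Complex.exp (Complex.I * (k * ξ) + φ))
          / (1 + Complex.exp (Complex.I * (k * ξ) + φ))) →
      ∀ ξ : ℝ,
        (1 + Complex.exp (Complex.I * (k * ξ) - φ)) ≠ 0 ∧
        (1 + Complex.exp (Complex.I * (k * ξ) + φ)) ≠ 0 ∧
        Complex.I * deriv mp ξ + lam * (mp ξ - mm ξ) + (u ξ : ℂ) * mp ξ = 0 := by
  intro lam mp mm hmp hmm ξ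
  set z : ℂ := I * (k * ξ)
  have hw : 1 + exp (z - φ) ≠ 0 := one_add_exp_ne_zero (by simp [z]; exact hφ.ne')
  have hv : 1 + exp (z + φ) ≠ 0 := one_add_exp_ne_zero (by simp [z]; exact hφ.ne')
  refine ⟨hw, hv, ?_⟩
  have hvw : exp (z + φ) - exp (z - φ) ≠ 0 := by
    rw [exp_add_sub_exp_sub, ← ofReal_sinh]
    exact mul_ne_zero (mul_ne_zero two_ne_zero (exp_ne_zero z))
      (ofReal_ne_zero.mpr (Real.sinh_pos_iff.mpr hφ).ne')
  have hz : HasDerivAt (fun t : ℝ => I * (k * t) - φ) (I * k) ξ := by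
    simpa using (((hasDerivAt_id (ξ : ℂ)).const_mul (k : ℂ)).const_mul I).sub_const (φ : ℂ)
      |>.comp_ofReal
  have hderiv := hz.div_one_add_cexp (2 * lam + c0 - k) (2 * lam + c0 + k) hw
  have hu' : (u ξ : ℂ) = k * (exp (z + φ) / (1 + exp (z + φ)) - exp (z - φ) / (1 + exp (z - φ))) := by
    have hcos : cosh z = cos (k * ξ) := by
      rw [show z = (k * ξ : ℂ) * I from mul_comm _ _, cosh_mul_I]
    rw [exp_div_one_add_exp_sub_exp_div_one_add_exp z φ hv hw, hcos, hu ξ]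
    push_cast
    ring
  have hc0' : (c0 : ℂ) = k * (exp (z + φ) + exp (z - φ)) / (exp (z + φ) - exp (z - φ)) := by
    rw [hc0]
    push_cast
    rw [mul_div_assoc, mul_div_assoc, ← cosh_div_sinh_eq z]
  rw [show mp = _ from funext hmp, hderiv.deriv, hmm ξ, hu']
  beta_reduce
  exact lax_equation_algebraic k lam c0 _ _ hw hv hvw hc0'

/-- the pair `(m⁺, m⁻)` of `2π/k`-periodic Lax eigenfunctions of
the traveling periodic wave of the Benjamin–Ono equation satisfies the
stationary first Lax equation `i (m⁺)' + λ(m⁺ − m⁻) + u·m⁺ = 0` for every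
real `ξ` and every real spectral parameter `λ`. -/
theorem stationary_lax_equation (k φ c0 : ℝ) (hk : 0 < k) (hφ : 0 < φ)
    (hc0 : c0 = k * Real.cosh φ / Real.sinh φ)
    (u : ℝ → ℝ)
    (hu : ∀ ξ : ℝ, u ξ = k * Real.sinh φ / (Real.cos (k * ξ) + Real.cosh φ)) :
    ∀ lam : ℝ, ∀ mp mm : ℝ → ℂ,
      (∀ ξ : ℝ, mp ξ =
        ((2 * lam + c0 - k) + (2 * lam + c0 + k) * Complex.exp (Complex.I * (k * ξ) - φ))
          / (1 + Complex.exp (Complex.I * (k * ξ) - φ))) →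
      (∀ ξ : ℝ, mm ξ =
        ((2 * lam + c0 - k) + (2 * lam + c0 + k) * Complex.exp (Complex.I * (k * ξ) + φ))
          / (1 + Complex.exp (Complex.I * (k * ξ) + φ))) →
      ∀ ξ : ℝ,
        (1 + Complex.exp (Complex.I * (k * ξ) - φ)) ≠ 0 ∧
        (1 + Complex.exp (Complex.I * (k * ξ) + φ)) ≠ 0 ∧
        Complex.I * deriv mp ξ + lam * (mp ξ - mm ξ) + (u ξ : ℂ) * mp ξ = 0 :=
  stationary_lax_equation_general k φ c0 hφ hc0 u hu
end

section
/- Let N ≥ 1, let k > 0, φ > 0, c0 = k·coth(φ), ξ0 ∈ ℝ, ξ = x − c0·t − ξ0, and let c_1, …, c_N > 0 be distinct with |c_j − c0| > k for all j; let x_1, …, x_N ∈ ℝ and η_j = x − c_j·t − x_j. Define complex (N+1)×(N+1) matrices F and F' (indices 0, 1, …, N) by: F_{00} = 1 + e^{i k ξ + φ}, F'_{00} = 1 + e^{i k ξ − φ}; F_{0m} = F'_{0m} = 2k/(k + c0 − c_m) and F_{m0} = F'_{m0} = 2c_m/(k + c_m − c0) for 1 ≤ m ≤ N; F_{jj} =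 −i c_j η_j − 1 − 2k c_j/((c0 − c_j)² − k²) and F'_{jj} = −i c_j η_j + 1 − 2k c_j/((c0 − c_j)² − k²) for 1 ≤ j ≤ N; and F_{jm} = F'_{jm} = 2c_j/(c_j − c_m) for 1 ≤ j ≠ m ≤ N. Then for every real (x,t): det(F') = (−1)^N · e^{i k ξ − φ} · conj(det(F)), where conj denotes complex conjugation. -/
/-- the conjugation identity
`det(F') = (−1)^N · e^{ikξ−φ} · conj(det F)` for the `(N+1)×(N+1)`
multi-breather tau matrices of the Benjamin–Ono equation (rows/columns
indexed by `Option (Fin N)`, with `none` playing the role of the index `0`). -/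
theorem multibreather_det_conjugation (N : ℕ) (hN : 1 ≤ N)
    (k φ c0 ξ0 x t : ℝ) (hk : 0 < k) (hφ : 0 < φ)
    (hc0 : c0 = k * Real.cosh φ / Real.sinh φ)
    (c xs : Fin N → ℝ) (hc : ∀ j, 0 < c j)
    (hdist : ∀ j m : Fin N, j ≠ m → c j ≠ c m)
    (hgap : ∀ j, k < |c j - c0|)
    (F F' : Matrix (Option (Fin N)) (Option (Fin N)) ℂ)
    (hF : F = Matrix.of fun i j =>
      match i, j with
      | none, none => 1 + Complex.exp (Complex.I * (k * (x - c0 * t - ξ0)) + φ)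
      | none, some m => (2 * k / (k + c0 - c m) : ℝ)
      | some j, none => (2 * c j / (k + c j - c0) : ℝ)
      | some j, some m =>
          if j = m then
            -Complex.I * (c j) * (x - c j * t - xs j) - 1
              - (2 * k * c j / ((c0 - c j) ^ 2 - k ^ 2) : ℝ)
          else (2 * c j / (c j - c m) : ℝ))
    (hF' : F' = Matrix.of fun i j =>
      match i, j with
      | none, none => 1 + Complex.exp (Complex.I * (k * (x - c0 * t - ξ0)) - φ)
      | none, some m => (2 * k / (k + c0 - c m) : ℝ)
      | some j, none => (2 * c j / (k + c j - c0) : ℝ)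
      | some j, some m =>
          if j = m then
            -Complex.I * (c j) * (x - c j * t - xs j) + 1
              - (2 * k * c j / ((c0 - c j) ^ 2 - k ^ 2) : ℝ)
          else (2 * c j / (c j - c m) : ℝ)) :
    F'.det = (-1) ^ N * Complex.exp (Complex.I * (k * (x - c0 * t - ξ0)) - φ)
        * (starRingEnd ℂ) F.det := by
  set s : ℂ := Complex.exp (Complex.I * (k * (x - c0 * t - ξ0)) - φ) with hs
  -- real non-vanishing facts
  have h1R : ∀ j, k + c0 - c j ≠ 0 := by
    intro j h
    have hg := hgap j
    have hcj : c j - c0 = k := by linarith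
    rw [hcj, abs_of_pos hk] at hg
    exact lt_irrefl _ hg
  have h2R : ∀ j, k + c j - c0 ≠ 0 := by
    intro j h
    have hg := hgap j
    have hcj : c j - c0 = -k := by linarith
    rw [hcj, abs_neg, abs_of_pos hk] at hg
    exact lt_irrefl _ hg
  have h3R : ∀ j, (c0 - c j) ^ 2 - k ^ 2 ≠ 0 := by
    intro j h
    have hg := hgap j
    have h1 := abs_nonneg (c j - c0)
    have h2 : |c j - c0| ^ 2 = (c j - c0) ^ 2 := sq_abs _
    nlinarith
  -- complex versions
  have hkC : (k : ℂ) ≠ 0 := Complex.ofReal_ne_zero.mpr hk.ne'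
  have hcC : ∀ j, (c j : ℂ) ≠ 0 := fun j => Complex.ofReal_ne_zero.mpr (hc j).ne'
  have h1C : ∀ j, (k : ℂ) + c0 - c j ≠ 0 := by
    intro j
    have h := Complex.ofReal_ne_zero.mpr (h1R j)
    push_cast at h
    exact h
  have h2C : ∀ j, (k : ℂ) + c j - c0 ≠ 0 := by
    intro j
    have h := Complex.ofReal_ne_zero.mpr (h2R j)
    push_cast at h
    exact h
  have h3C : ∀ j, ((c0 : ℂ) - c j) ^ 2 - (k : ℂ) ^ 2 ≠ 0 := by
    intro j
    have h := Complex.ofReal_ne_zero.mpr (h3R j)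
    push_cast at h
    exact h
  have hdC : ∀ j m : Fin N, j ≠ m → (c j : ℂ) - c m ≠ 0 := by
    intro j m hjm
    have h := Complex.ofReal_ne_zero.mpr (sub_ne_zero.mpr (hdist j m hjm))
    push_cast at h
    exact h
  -- the transformation matrices
  set dfun : Option (Fin N) → ℂ := fun i =>
    match i with
    | none => (k : ℂ)
    | some j => (c j : ℂ) * ((k : ℂ) + c0 - c j) / ((k : ℂ) + c j - c0) with hdfun
  set nfun : Option (Fin N) → ℂ := fun i =>
    match i with
    | none => 1
    | some _ => -1 with hnfun
  set csfun : Option (Fin N) → ℂ := fun i =>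
    match i with
    | none => s
    | some _ => 1 with hcsfun
  set Sh : Matrix (Option (Fin N)) (Option (Fin N)) ℂ := Matrix.of (fun i a =>
    match i, a with
    | none, none => 1
    | none, some _ => 0
    | some j, none => -(2 * (c j : ℂ)) / ((k : ℂ) + c j - c0)
    | some j, some m => if m = j then 1 else 0) with hSh
  have hdne : ∀ i, dfun i ≠ 0 := by
    intro i
    match i with
    | none => exact hkC
    | some j => exact div_ne_zero (mul_ne_zero (hcC j) (h1C j)) (h2C j)
  -- exp product fact
  have hprod : (starRingEnd ℂ) (Complex.exp (Complex.I * (k * (x - c0 * t - ξ0)) + φ)) * s = 1 := by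
    rw [← Complex.exp_conj, hs, ← Complex.exp_add]
    have harg : (starRingEnd ℂ) (Complex.I * (k * (x - c0 * t - ξ0)) + φ)
        + (Complex.I * (k * (x - c0 * t - ξ0)) - φ) = 0 := by
      simp only [map_add, map_mul, map_sub, Complex.conj_I, Complex.conj_ofReal]
      ring
    rw [harg, Complex.exp_zero]
  -- the key matrix identity
  have key : Sh * F' * Matrix.diagonal dfun
      = Matrix.diagonal dfun * Matrix.diagonal nfun * F.conjTranspose * Matrix.diagonal csfun := by
    rw [Matrix.diagonal_mul_diagonal]
    ext i j
    rw [Matrix.mul_diagonal, Matrix.mul_diagonal, Matrix.diagonal_mul,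
      Matrix.mul_apply, Fintype.sum_option, Matrix.conjTranspose_apply, hF, hF']
    rcases i with _ | a <;> rcases j with _ | b
    · -- none none
      simp only [hSh, Matrix.of_apply, Pi.mul_apply]
      simp only [hdfun, hnfun, hcsfun]
      simp only [zero_mul, Finset.sum_const_zero, add_zero, one_mul, mul_one]
      simp only [Complex.star_def, map_add, map_one]
      linear_combination (-(k : ℂ)) * hprod
    · -- none some
      simp only [hSh, Matrix.of_apply, Pi.mul_apply]
      simp only [hdfun, hnfun, hcsfun]
      simp only [zero_mul, Finset.sum_const_zero, add_zero, one_mul, mul_one]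
      rw [Complex.star_def, Complex.conj_ofReal]
      push_cast
      field_simp [h1C b, h2C b]
    · -- some none
      simp only [hSh, Matrix.of_apply, Pi.mul_apply]
      simp only [hdfun, hnfun, hcsfun]
      simp only [ite_mul, one_mul, zero_mul, Finset.sum_ite_eq', Finset.mem_univ, if_true]
      rw [Complex.star_def, Complex.conj_ofReal]
      push_cast
      field_simp [h1C a, h2C a]
      ring
    · -- some some
      by_cases hab : a = b
      · subst hab
        simp only [hSh, Matrix.of_apply, Pi.mul_apply]
        simp only [hdfun, hnfun, hcsfun]
        simp only [ite_mul, one_mul, zero_mul, Finset.sum_ite_eq', Finset.mem_univ, if_true,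
          if_pos rfl]
        simp only [Complex.star_def, map_sub, map_add, map_mul, map_neg, map_one,
          Complex.conj_I, Complex.conj_ofReal]
        push_cast
        field_simp [h1C a, h2C a, h3C a]
        ring
      · have hba : ¬ b = a := fun h => hab h.symm
        simp only [hSh, Matrix.of_apply, Pi.mul_apply]
        simp only [hdfun, hnfun, hcsfun]
        simp only [ite_mul, one_mul, zero_mul, Finset.sum_ite_eq', Finset.mem_univ, if_true,
          if_neg hab, if_neg hba]
        rw [Complex.star_def, Complex.conj_ofReal]
        push_cast
        field_simp [hdC a b hab, hdC b a (Ne.symm hab), h1C a, h1C b, h2C a, h2C b]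
        ring
  -- determinants of the factors
  have hdetSh : Sh.det = 1 := by
    rw [← Matrix.det_submatrix_equiv_self (finSuccEquiv N) Sh]
    rw [Matrix.det_of_lowerTriangular]
    · apply Finset.prod_eq_one
      intro i _
      rcases h : finSuccEquiv N i with _ | a <;>
        simp [Matrix.submatrix_apply, hSh, h]
    · intro i j hij
      have hij' : i < j := hij
      have hj0 : j ≠ 0 := by
        intro h
        subst h
        exact absurd hij' (by simp [Fin.lt_def])
      obtain ⟨b, hb⟩ : ∃ b, finSuccEquiv N j = some b := by
        rcases h : finSuccEquiv N j with _ | b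
        · exfalso
          apply hj0
          apply (finSuccEquiv N).injective
          rw [h, finSuccEquiv_zero]
        · exact ⟨b, rfl⟩
      have hne : finSuccEquiv N j ≠ finSuccEquiv N i :=
        fun h => (ne_of_lt hij') ((finSuccEquiv N).injective h).symm
      rcases h2 : finSuccEquiv N i with _ | a
      · simp [Matrix.submatrix_apply, hSh, hb, h2]
      · rw [h2, hb] at hne
        have hba : b ≠ a := fun h => hne (by rw [h])
        simp [Matrix.submatrix_apply, hSh, hb, h2, hba]
  have hdetD : (Matrix.diagonal dfun).det = ∏ i, dfun i := Matrix.det_diagonal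
  have hDne : (∏ i, dfun i) ≠ 0 := Finset.prod_ne_zero_iff.mpr fun i _ => hdne i
  have hdetN : (Matrix.diagonal nfun).det = (-1 : ℂ) ^ N := by
    rw [Matrix.det_diagonal, Fintype.prod_option]
    simp [hnfun]
  have hdetCs : (Matrix.diagonal csfun).det = s := by
    rw [Matrix.det_diagonal, Fintype.prod_option]
    simp [hcsfun]
  have hdets := congrArg Matrix.det key
  rw [Matrix.det_mul, Matrix.det_mul, Matrix.det_mul, Matrix.det_mul, Matrix.det_mul,
    hdetSh, hdetD, hdetN, hdetCs, Matrix.det_conjTranspose] at hdets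
  have hcancel : F'.det = (-1 : ℂ) ^ N * star F.det * s := by
    apply mul_left_cancel₀ hDne
    calc (∏ i, dfun i) * F'.det = 1 * F'.det * (∏ i, dfun i) := by ring
    _ = (∏ i, dfun i) * (-1 : ℂ) ^ N * star F.det * s := hdets
    _ = (∏ i, dfun i) * ((-1 : ℂ) ^ N * star F.det * s) := by ring
  rw [hcancel, starRingEnd_apply]
  ring
end

section
/- Let k > 0, φ > 0, c0 = k·coth(φ), ξ0 ∈ ℝ, ξ = x − c0·t − ξ0; let c_1, c_2 > 0 be distinct with |c_j − c0| > k, let x_1, x_2 ∈ ℝ, η_j = x − c_j·t − x_j, and β_j = 2k c_j/((c_j − c0)² − k²) for j = 1, 2. Let F be the 3×3 matrix with rows (1 + e^{ikξ+φ}, 2k/(k + c0 − c_1), 2k/(k + c0 − c_2)), (2c_1/(k + c_1 − c0), −i c_1 η_1 − 1 − β_1, 2c_1/(c_1 − c_2)), (2c_2/(k + c_2 − c0), 2c_2/(c_2 − c_1), −i c_2 η_2 − 1 − β_2). Then det(F) = (1 + e^{ikξ+φ})·[(1 + i c_1 η_1)(1 + i c_2 η_2) + 4c_1 c_2/(c_1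 − c_2)² + β_1 β_2] + (e^{ikξ+φ} − 1)·[β_1(1 + i c_2 η_2) + β_2(1 + i c_1 η_1)]. -/
set_option maxHeartbeats 1000000 in
/-- explicit expansion of the determinant of the `3×3`
tau-function matrix of the two-breather solution of the Benjamin–Ono
equation on the traveling periodic wave background. -/
theorem two_breather_det_expansion (k φ c0 ξ0 x1 x2 c1 c2 β1 β2 x t : ℝ)
    (hk : 0 < k) (hφ : 0 < φ)
    (hc0 : c0 = k * Real.cosh φ / Real.sinh φ)
    (hc1 : 0 < c1) (hc2 : 0 < c2) (hne : c1 ≠ c2)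
    (hgap1 : k < |c1 - c0|) (hgap2 : k < |c2 - c0|)
    (hβ1 : β1 = 2 * k * c1 / ((c1 - c0) ^ 2 - k ^ 2))
    (hβ2 : β2 = 2 * k * c2 / ((c2 - c0) ^ 2 - k ^ 2))
    (F : Matrix (Fin 3) (Fin 3) ℂ)
    (hF : F = !![1 + Complex.exp (Complex.I * (k * (x - c0 * t - ξ0)) + φ),
                 ((2 * k / (k + c0 - c1) : ℝ) : ℂ),
                 ((2 * k / (k + c0 - c2) : ℝ) : ℂ);
                 ((2 * c1 / (k + c1 - c0) : ℝ) : ℂ),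
                 -Complex.I * c1 * (x - c1 * t - x1) - 1 - (β1 : ℂ),
                 ((2 * c1 / (c1 - c2) : ℝ) : ℂ);
                 ((2 * c2 / (k + c2 - c0) : ℝ) : ℂ),
                 ((2 * c2 / (c2 - c1) : ℝ) : ℂ),
                 -Complex.I * c2 * (x - c2 * t - x2) - 1 - (β2 : ℂ)]) :
    F.det =
      (1 + Complex.exp (Complex.I * (k * (x - c0 * t - ξ0)) + φ))
        * ((1 + Complex.I * c1 * (x - c1 * t - x1))
              * (1 + Complex.I * c2 * (x - c2 * t - x2))
            + (4 * c1 * c2 / (c1 - c2) ^ 2 : ℝ) + (β1 * β2 : ℝ))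
      + (Complex.exp (Complex.I * (k * (x - c0 * t - ξ0)) + φ) - 1)
        * ((β1 : ℂ) * (1 + Complex.I * c2 * (x - c2 * t - x2))
            + (β2 : ℂ) * (1 + Complex.I * c1 * (x - c1 * t - x1))) := by
  have habs1 : k ^ 2 < (c1 - c0) ^ 2 := by
    have h := sq_lt_sq' (by linarith [abs_nonneg (c1 - c0), neg_abs_le (c1 - c0)] : -(|c1 - c0|) < k) hgap1
    calc k ^ 2 < |c1 - c0| ^ 2 := h
    _ = (c1 - c0) ^ 2 := sq_abs _
  have habs2 : k ^ 2 < (c2 - c0) ^ 2 := by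
    have h := sq_lt_sq' (by linarith [abs_nonneg (c2 - c0), neg_abs_le (c2 - c0)] : -(|c2 - c0|) < k) hgap2
    calc k ^ 2 < |c2 - c0| ^ 2 := h
    _ = (c2 - c0) ^ 2 := sq_abs _
  have hd1 : (c1 - c0) ^ 2 - k ^ 2 ≠ 0 := by nlinarith
  have hd2 : (c2 - c0) ^ 2 - k ^ 2 ≠ 0 := by nlinarith
  have ha1 : k + c0 - c1 ≠ 0 := by intro h; apply hd1; nlinarith
  have hb1 : k + c1 - c0 ≠ 0 := by intro h; apply hd1; nlinarith
  have ha2 : k + c0 - c2 ≠ 0 := by intro h; apply hd2; nlinarith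
  have hb2 : k + c2 - c0 ≠ 0 := by intro h; apply hd2; nlinarith
  have hcc : c1 - c2 ≠ 0 := sub_ne_zero.mpr hne
  -- real product identities
  have p1 : (2 * k / (k + c0 - c1)) * (2 * c1 / (k + c1 - c0)) = -(2 * β1) := by
    rw [hβ1]; field_simp; ring
  have p2 : (2 * k / (k + c0 - c2)) * (2 * c2 / (k + c2 - c0)) = -(2 * β2) := by
    rw [hβ2]; field_simp; ring
  have p3 : (2 * c1 / (c1 - c2)) * (2 * c2 / (c2 - c1)) = -(4 * c1 * c2 / (c1 - c2) ^ 2) := by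
    have h21 : c2 - c1 ≠ 0 := by intro h; exact hcc (by linarith)
    field_simp; ring
  have p4 : (2 * k / (k + c0 - c1)) * (2 * c1 / (c1 - c2)) * (2 * c2 / (k + c2 - c0))
      + (2 * k / (k + c0 - c2)) * (2 * c2 / (c2 - c1)) * (2 * c1 / (k + c1 - c0))
      = 4 * (β1 * β2) := by
    have h21 : c2 - c1 ≠ 0 := by intro h; exact hcc (by linarith)
    rw [hβ1, hβ2]; field_simp; ring
  -- complex versions
  have H1 : ((2 * k / (k + c0 - c1) : ℝ) : ℂ) * ((2 * c1 / (k + c1 - c0) : ℝ) : ℂ)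
      = -(2 * (β1 : ℂ)) := by rw [← Complex.ofReal_mul, p1]; push_cast; ring
  have H2 : ((2 * k / (k + c0 - c2) : ℝ) : ℂ) * ((2 * c2 / (k + c2 - c0) : ℝ) : ℂ)
      = -(2 * (β2 : ℂ)) := by rw [← Complex.ofReal_mul, p2]; push_cast; ring
  have H3 : ((2 * c1 / (c1 - c2) : ℝ) : ℂ) * ((2 * c2 / (c2 - c1) : ℝ) : ℂ)
      = -((4 * c1 * c2 / (c1 - c2) ^ 2 : ℝ) : ℂ) := by
    rw [← Complex.ofReal_mul, p3]; push_cast; ring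
  have H4 : ((2 * k / (k + c0 - c1) : ℝ) : ℂ) * ((2 * c1 / (c1 - c2) : ℝ) : ℂ)
        * ((2 * c2 / (k + c2 - c0) : ℝ) : ℂ)
      + ((2 * k / (k + c0 - c2) : ℝ) : ℂ) * ((2 * c2 / (c2 - c1) : ℝ) : ℂ)
        * ((2 * c1 / (k + c1 - c0) : ℝ) : ℂ)
      = 4 * ((β1 : ℂ) * (β2 : ℂ)) := by
    have h := congrArg (fun r : ℝ => (r : ℂ)) p4
    simpa only [Complex.ofReal_add, Complex.ofReal_mul, Complex.ofReal_ofNat] using h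
  have H5 : ((β1 * β2 : ℝ) : ℂ) = (β1 : ℂ) * (β2 : ℂ) := by push_cast; ring
  subst hF
  rw [Matrix.det_fin_three]
  simp only [Matrix.cons_val', Matrix.cons_val_zero, Matrix.cons_val_one, Matrix.head_cons,
    Matrix.empty_val', Matrix.cons_val_fin_one, Matrix.head_fin_const, Matrix.cons_val_two,
    Matrix.tail_cons, Matrix.of_apply]
  linear_combination
      (Complex.I * (c2 : ℂ) * ((x : ℂ) - c2 * t - x2) + 1 + (β2 : ℂ)) * H1
    + (Complex.I * (c1 : ℂ) * ((x : ℂ) - c1 * t - x1) + 1 + (β1 : ℂ)) * H2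
    - (1 + Complex.exp (Complex.I * (k * (x - c0 * t - ξ0)) + φ)) * H3
    + H4
    - (1 + Complex.exp (Complex.I * (k * (x - c0 * t - ξ0)) + φ)) * H5
end

section
/- Let c0 > 0 and c > 0 with c ≠ c0, let ξ0, η0 ∈ ℝ, and set ξ = x − c0·t − ξ0 and η = x − c·t − η0. Define f(x,t) = (1 + i c0 ξ)(1 + i c η) + 4 c c0/(c − c0)² and f'(x,t) = (1 − i c0 ξ)(1 − i c η) + 4 c c0/(c − c0)². Then f and f' satisfy the Hirota bilinear equation i(∂_t f' · f − f' · ∂_t f) = ∂_x² f' · f − 2 ∂_x f' · ∂_x f + f' · ∂_x² f at every real (x,t). -/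
/-- the tau functions of the 2-soliton solution of the
Benjamin–Ono equation satisfy the Hirota bilinear equation. -/
theorem hirota_two_soliton (c0 c ξ0 η0 : ℝ) (hc0 : 0 < c0) (hc : 0 < c)
    (hne : c ≠ c0)
    (f f' : ℝ → ℝ → ℂ)
    (hf : ∀ x t : ℝ, f x t =
      (1 + Complex.I * (c0 * (x - c0 * t - ξ0))) * (1 + Complex.I * (c * (x - c * t - η0)))
        + (4 * c * c0 / (c - c0) ^ 2 : ℝ))
    (hf' : ∀ x t : ℝ, f' x t =
      (1 - Complex.I * (c0 * (x - c0 * t - ξ0))) * (1 - Complex.I * (c * (x - c * t - η0)))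
        + (4 * c * c0 / (c - c0) ^ 2 : ℝ)) :
    HirotaBO f f' := by
  intro x t
  -- abbreviations
  -- time derivatives of the two factors
  have hAt : HasDerivAt (fun s : ℝ => 1 + Complex.I * (↑c0 * (↑x - ↑c0 * ↑s - ↑ξ0)))
      (Complex.I * (↑c0 * -(↑c0 * 1))) t :=
    ((((((hasDerivAt_id t).ofReal_comp).const_mul (c0:ℂ)).const_sub (x:ℂ)).sub_const
      (ξ0:ℂ)).const_mul (c0:ℂ)).const_mul Complex.I |>.const_add 1
  have hBt : HasDerivAt (fun s : ℝ => 1 + Complex.I * (↑c * (↑x - ↑c * ↑s - ↑η0)))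
      (Complex.I * (↑c * -(↑c * 1))) t :=
    ((((((hasDerivAt_id t).ofReal_comp).const_mul (c:ℂ)).const_sub (x:ℂ)).sub_const
      (η0:ℂ)).const_mul (c:ℂ)).const_mul Complex.I |>.const_add 1
  have hAt' : HasDerivAt (fun s : ℝ => 1 - Complex.I * (↑c0 * (↑x - ↑c0 * ↑s - ↑ξ0)))
      (-(Complex.I * (↑c0 * -(↑c0 * 1)))) t :=
    (((((((hasDerivAt_id t).ofReal_comp).const_mul (c0:ℂ)).const_sub (x:ℂ)).sub_const
      (ξ0:ℂ)).const_mul (c0:ℂ)).const_mul Complex.I).const_sub 1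
  have hBt' : HasDerivAt (fun s : ℝ => 1 - Complex.I * (↑c * (↑x - ↑c * ↑s - ↑η0)))
      (-(Complex.I * (↑c * -(↑c * 1)))) t :=
    (((((((hasDerivAt_id t).ofReal_comp).const_mul (c:ℂ)).const_sub (x:ℂ)).sub_const
      (η0:ℂ)).const_mul (c:ℂ)).const_mul Complex.I).const_sub 1
  -- space derivatives of the two factors, at an arbitrary point
  have hAx : ∀ z : ℝ, HasDerivAt (fun y : ℝ => 1 + Complex.I * (↑c0 * (↑y - ↑c0 * ↑t - ↑ξ0)))
      (Complex.I * (↑c0 * 1)) z := fun z =>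
    ((((hasDerivAt_id z).ofReal_comp).sub_const ((c0:ℂ) * (t:ℂ))).sub_const
      (ξ0:ℂ)).const_mul (c0:ℂ) |>.const_mul Complex.I |>.const_add 1
  have hBx : ∀ z : ℝ, HasDerivAt (fun y : ℝ => 1 + Complex.I * (↑c * (↑y - ↑c * ↑t - ↑η0)))
      (Complex.I * (↑c * 1)) z := fun z =>
    ((((hasDerivAt_id z).ofReal_comp).sub_const ((c:ℂ) * (t:ℂ))).sub_const
      (η0:ℂ)).const_mul (c:ℂ) |>.const_mul Complex.I |>.const_add 1
  have hAx' : ∀ z : ℝ, HasDerivAt (fun y : ℝ => 1 - Complex.I * (↑c0 * (↑y - ↑c0 * ↑t - ↑ξ0)))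
      (-(Complex.I * (↑c0 * 1))) z := fun z =>
    (((((hasDerivAt_id z).ofReal_comp).sub_const ((c0:ℂ) * (t:ℂ))).sub_const
      (ξ0:ℂ)).const_mul (c0:ℂ) |>.const_mul Complex.I).const_sub 1
  have hBx' : ∀ z : ℝ, HasDerivAt (fun y : ℝ => 1 - Complex.I * (↑c * (↑y - ↑c * ↑t - ↑η0)))
      (-(Complex.I * (↑c * 1))) z := fun z =>
    (((((hasDerivAt_id z).ofReal_comp).sub_const ((c:ℂ) * (t:ℂ))).sub_const
      (η0:ℂ)).const_mul (c:ℂ) |>.const_mul Complex.I).const_sub 1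
  -- time derivative of f and f'
  have hft : HasDerivAt (fun s : ℝ =>
      (1 + Complex.I * (↑c0 * (↑x - ↑c0 * ↑s - ↑ξ0))) *
        (1 + Complex.I * (↑c * (↑x - ↑c * ↑s - ↑η0))) + ((4 * c * c0 / (c - c0) ^ 2 : ℝ) : ℂ))
      (Complex.I * (↑c0 * -(↑c0 * 1)) * (1 + Complex.I * (↑c * (↑x - ↑c * ↑t - ↑η0)))
        + (1 + Complex.I * (↑c0 * (↑x - ↑c0 * ↑t - ↑ξ0))) * (Complex.I * (↑c * -(↑c * 1)))) t :=
    (hAt.mul hBt).add_const _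
  have hft' : HasDerivAt (fun s : ℝ =>
      (1 - Complex.I * (↑c0 * (↑x - ↑c0 * ↑s - ↑ξ0))) *
        (1 - Complex.I * (↑c * (↑x - ↑c * ↑s - ↑η0))) + ((4 * c * c0 / (c - c0) ^ 2 : ℝ) : ℂ))
      (-(Complex.I * (↑c0 * -(↑c0 * 1))) * (1 - Complex.I * (↑c * (↑x - ↑c * ↑t - ↑η0)))
        + (1 - Complex.I * (↑c0 * (↑x - ↑c0 * ↑t - ↑ξ0))) * -(Complex.I * (↑c * -(↑c * 1)))) t :=
    (hAt'.mul hBt').add_const _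
  -- space derivative of f and f' at an arbitrary point
  have hfx : ∀ z : ℝ, HasDerivAt (fun y : ℝ =>
      (1 + Complex.I * (↑c0 * (↑y - ↑c0 * ↑t - ↑ξ0))) *
        (1 + Complex.I * (↑c * (↑y - ↑c * ↑t - ↑η0))) + ((4 * c * c0 / (c - c0) ^ 2 : ℝ) : ℂ))
      (Complex.I * (↑c0 * 1) * (1 + Complex.I * (↑c * (↑z - ↑c * ↑t - ↑η0)))
        + (1 + Complex.I * (↑c0 * (↑z - ↑c0 * ↑t - ↑ξ0))) * (Complex.I * (↑c * 1))) z :=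
    fun z => ((hAx z).mul (hBx z)).add_const _
  have hfx' : ∀ z : ℝ, HasDerivAt (fun y : ℝ =>
      (1 - Complex.I * (↑c0 * (↑y - ↑c0 * ↑t - ↑ξ0))) *
        (1 - Complex.I * (↑c * (↑y - ↑c * ↑t - ↑η0))) + ((4 * c * c0 / (c - c0) ^ 2 : ℝ) : ℂ))
      (-(Complex.I * (↑c0 * 1)) * (1 - Complex.I * (↑c * (↑z - ↑c * ↑t - ↑η0)))
        + (1 - Complex.I * (↑c0 * (↑z - ↑c0 * ↑t - ↑ξ0))) * -(Complex.I * (↑c * 1))) z :=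
    fun z => ((hAx' z).mul (hBx' z)).add_const _
  -- first space derivative as a function
  have hd1 : ∀ y : ℝ, deriv (fun z : ℝ => f z t) y =
      Complex.I * (↑c0 * 1) * (1 + Complex.I * (↑c * (↑y - ↑c * ↑t - ↑η0)))
        + (1 + Complex.I * (↑c0 * (↑y - ↑c0 * ↑t - ↑ξ0))) * (Complex.I * (↑c * 1)) := by
    intro y
    simp only [hf]
    exact (hfx y).deriv
  have hd1' : ∀ y : ℝ, deriv (fun z : ℝ => f' z t) y =
      -(Complex.I * (↑c0 * 1)) * (1 - Complex.I * (↑c * (↑y - ↑c * ↑t - ↑η0)))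
        + (1 - Complex.I * (↑c0 * (↑y - ↑c0 * ↑t - ↑ξ0))) * -(Complex.I * (↑c * 1)) := by
    intro y
    simp only [hf']
    exact (hfx' y).deriv
  -- second space derivatives
  have hd2 : HasDerivAt (fun y : ℝ =>
      Complex.I * (↑c0 * 1) * (1 + Complex.I * (↑c * (↑y - ↑c * ↑t - ↑η0)))
        + (1 + Complex.I * (↑c0 * (↑y - ↑c0 * ↑t - ↑ξ0))) * (Complex.I * (↑c * 1)))
      (Complex.I * (↑c0 * 1) * (Complex.I * (↑c * 1))
        + Complex.I * (↑c0 * 1) * (Complex.I * (↑c * 1))) x :=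
    ((hBx x).const_mul _).add ((hAx x).mul_const _)
  have hd2' : HasDerivAt (fun y : ℝ =>
      -(Complex.I * (↑c0 * 1)) * (1 - Complex.I * (↑c * (↑y - ↑c * ↑t - ↑η0)))
        + (1 - Complex.I * (↑c0 * (↑y - ↑c0 * ↑t - ↑ξ0))) * -(Complex.I * (↑c * 1)))
      (-(Complex.I * (↑c0 * 1)) * -(Complex.I * (↑c * 1))
        + -(Complex.I * (↑c0 * 1)) * -(Complex.I * (↑c * 1))) x :=
    ((hBx' x).const_mul _).add ((hAx' x).mul_const _)
  -- assemble
  simp only [hd1, hd1']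
  simp only [hf, hf']
  rw [hft.deriv, hft'.deriv, hd2.deriv, hd2'.deriv]
  have hKne : ((c : ℂ) - (c0 : ℂ)) ≠ 0 := sub_ne_zero.mpr (by exact_mod_cast hne)
  push_cast
  field_simp
  ring
end
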